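/- arXiv:1206.0992 — 8 statements merged into one kernel-verified Lean document; each statement's English description precedes it below -/
import Mathlib

section
/- Let n ≥ 1 be an integer. There exist an integer t ≥ 1 and matrices P_0, …, P_{t−1} ∈ 𝓜_n such that the product P_{t−1}⋯P_0 has rank 1 if and only if n is a power of two, i.e., n = 2^m for some integer m ≥ 0. -/
/-!
A gossip matrix is `M_{ij} = (1 + P_{(i j)}) / 2`, with `P_{(i j)}` the matrix of the
transposition, so every product of gossip matrices is doubly stochastic with entries in `ℤ[1/2]`.
A doubly stochastic matrix of rank one fixes the all-ones vector, so its columns are constant, and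
their sums force every entry to be `1/n`. Hence `1/n ∈ ℤ[1/2]` and `n` is a power of two.

Conversely, write `J_ι` for the matrix with all entries `1/|ι|`. Then
`J_{ι × κ} = J_ι ⊗ J_κ = (1 ⊗ J_κ) (J_ι ⊗ 1)`. Up to reindexing, `A ⊗ 1` and `1 ⊗ B` are block
diagonal with every block equal to `A`, resp. `B`; factorising the blocks one at a time shows that
products of gossip matrices are closed under `⊗`. Starting from `J_2 = M_{01}`, this gives
`J_{2^m}`.
-/

open Matrix

/-- The symmetric gossip matrix `M_{ij} = I - (e_i - e_j)(e_i - e_j)^T / 2`. -/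
noncomputable def gossipM (n : ℕ) (i j : Fin n) : Matrix (Fin n) (Fin n) ℝ :=
  1 - (1 / 2 : ℝ) • vecMulVec (Pi.single i 1 - Pi.single j 1) (Pi.single i 1 - Pi.single j 1)

open scoped Kronecker

noncomputable def gossip {ι : Type*} [DecidableEq ι] (i j : ι) : Matrix ι ι ℝ :=
  1 - (1 / 2 : ℝ) • vecMulVec (Pi.single i 1 - Pi.single j 1) (Pi.single i 1 - Pi.single j 1)

theorem gossipM_eq_gossip (n : ℕ) (i j : Fin n) : gossipM n i j = gossip i j := rfl

noncomputable def averagingMatrix (ι : Type*) [Fintype ι] : Matrix ι ι ℝ :=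
  of fun _ _ => (Fintype.card ι : ℝ)⁻¹

def gossipMonoid (ι : Type*) [Fintype ι] [DecidableEq ι] : Submonoid (Matrix ι ι ℝ) :=
  Submonoid.closure (Set.range fun p : ι × ι => gossip p.1 p.2)

def dyadic : Subring ℝ where
  carrier := {x | ∃ (k : ℕ) (a : ℤ), x * 2 ^ k = a}
  zero_mem' := ⟨0, 0, by norm_num⟩
  one_mem' := ⟨0, 1, by norm_num⟩
  add_mem' := by
    rintro x y ⟨k, a, ha⟩ ⟨l, b, hb⟩
    exact ⟨k + l, a * 2 ^ l + b * 2 ^ k, by push_cast; rw [pow_add, ← ha, ← hb]; ring⟩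
  mul_mem' := by
    rintro x y ⟨k, a, ha⟩ ⟨l, b, hb⟩
    exact ⟨k + l, a * b, by push_cast; rw [pow_add, ← ha, ← hb]; ring⟩
  neg_mem' := by
    rintro x ⟨k, a, ha⟩
    exact ⟨k, -a, by push_cast; rw [← ha]; ring⟩

section Gossip

variable {ι κ : Type*} [DecidableEq ι] [DecidableEq κ]

theorem gossip_apply (i j a b : ι) : gossip i j a b =
    (if a = b then 1 else 0) - 1 / 2 *
      (((if a = i then 1 else 0) - if a = j then 1 else 0) *
        ((if b = i then 1 else 0) - if b = j then 1 else 0)) := by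
  simp [gossip, vecMulVec_apply, one_apply, Pi.single_apply]

theorem gossip_self (i : ι) : gossip i i = 1 := by
  simp [gossip]

theorem gossip_eq_half_smul_one_add_permMatrix (i j : ι) :
    gossip i j = (1 / 2 : ℝ) • (1 + (Equiv.swap i j).permMatrix ℝ) := by
  ext a b
  simp only [gossip_apply, Matrix.smul_apply, Matrix.add_apply, one_apply, PEquiv.toMatrix_apply,
    Equiv.toPEquiv_apply, Option.mem_def, Option.some.injEq, smul_eq_mul]
  by_cases hai : a = i <;> by_cases haj : a = j <;> by_cases hbi : b = i <;>
    by_cases hbj : b = j <;> simp_all [Equiv.swap_apply_of_ne_of_ne, eq_comm] <;> ring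

theorem gossip_prodMk (i j : ι) (k : κ) :
    gossip ((i, k) : ι × κ) (j, k) = blockDiagonal (Pi.mulSingle k (gossip i j)) := by
  ext ⟨x, c⟩ ⟨y, d⟩
  simp only [blockDiagonal_apply, Pi.mulSingle_apply]
  split_ifs with hcd hck <;> subst_vars
  · simp [gossip_apply]
  · simp [gossip_apply, one_apply, hck]
  · rcases eq_or_ne c k with rfl | hck
    · simp [gossip_apply, hcd, Ne.symm hcd]
    · simp [gossip_apply, hcd, hck]

theorem reindex_gossip (e : ι ≃ κ) (i j : ι) :
    reindex e e (gossip i j) = gossip (e i) (e j) := by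
  ext a b
  simp [gossip_apply, e.eq_symm_apply, e.symm_apply_eq]

end Gossip

section Averaging

variable {ι κ : Type*} [Fintype ι] [Fintype κ]

theorem averagingMatrix_kronecker :
    averagingMatrix ι ⊗ₖ averagingMatrix κ = averagingMatrix (ι × κ) := by
  ext a b
  simp [averagingMatrix, Fintype.card_prod, mul_comm]

theorem reindex_averagingMatrix (e : ι ≃ κ) :
    reindex e e (averagingMatrix ι) = averagingMatrix κ := by
  ext a b
  simp [averagingMatrix, Fintype.card_congr e]

theorem averagingMatrix_fin_two : averagingMatrix (Fin 2) = gossip 0 1 := by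
  ext a b
  fin_cases a <;> fin_cases b <;> simp [averagingMatrix, gossip_apply] <;> norm_num

theorem rank_averagingMatrix [Nonempty ι] : (averagingMatrix ι).rank = 1 := by
  refine le_antisymm ?_ (Nat.one_le_iff_ne_zero.mpr ?_)
  · have : averagingMatrix ι = vecMulVec (fun _ => (Fintype.card ι : ℝ)⁻¹) 1 := by
      ext a b
      simp [averagingMatrix, vecMulVec_apply]
    exact this ▸ rank_vecMulVec_le _ _
  · rw [Matrix.rank, Ne, Submodule.finrank_eq_zero, ← Ne, Submodule.ne_bot_iff]
    refine ⟨1, LinearMap.mem_range.mpr ⟨1, ?_⟩, one_ne_zero⟩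
    ext a
    simp [averagingMatrix, mulVec, dotProduct]

end Averaging

section Necessity

variable {ι : Type*} [Fintype ι] [DecidableEq ι]

theorem gossip_mem_doublyStochastic (i j : ι) : gossip i j ∈ doublyStochastic ℝ ι := by
  rw [gossip_eq_half_smul_one_add_permMatrix, smul_add]
  exact convex_doublyStochastic (one_mem _) permMatrix_mem_doublyStochastic
    (by norm_num) (by norm_num) (by norm_num)

theorem gossip_mem_dyadic_matrix (i j : ι) : gossip i j ∈ dyadic.matrix := by
  have half_mem : (1 / 2 : ℝ) ∈ dyadic := ⟨1, 1, by norm_num⟩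
  have ite_mem (p : Prop) [Decidable p] : (if p then (1 : ℝ) else 0) ∈ dyadic := by
    split_ifs
    exacts [one_mem _, zero_mem _]
  intro a b
  change gossip i j a b ∈ dyadic
  rw [gossip_apply]
  exact sub_mem (ite_mem _) (mul_mem half_mem
    (mul_mem (sub_mem (ite_mem _) (ite_mem _)) (sub_mem (ite_mem _) (ite_mem _))))

theorem gossipMonoid_le_doublyStochastic_inf_dyadic :
    gossipMonoid ι ≤ doublyStochastic ℝ ι ⊓ dyadic.matrix.toSubmonoid :=
  Submonoid.closure_le.mpr <| Set.range_subset_iff.mpr fun p =>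
    ⟨gossip_mem_doublyStochastic p.1 p.2, gossip_mem_dyadic_matrix p.1 p.2⟩

theorem eq_averagingMatrix_of_rank_eq_one {A : Matrix ι ι ℝ} (hA : A ∈ doublyStochastic ℝ ι)
    (hrank : A.rank = 1) : A = averagingMatrix ι := by
  have : Nonempty ι := Fintype.card_pos_iff.mp (by have := A.rank_le_card_width; omega)
  have hrange : LinearMap.range A.mulVecLin = ℝ ∙ 1 := by
    refine (Submodule.eq_of_le_of_finrank_eq ?_ ?_).symm
    · exact (Submodule.span_singleton_le_iff_mem _ _).mpr
        (LinearMap.mem_range.mpr ⟨1, mulVec_one_of_mem_doublyStochastic hA⟩)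
    · rw [finrank_span_singleton one_ne_zero]
      exact hrank.symm
  ext a b
  obtain ⟨c, hc⟩ : ∃ c : ℝ, ∀ x, A x b = c := by
    have : A *ᵥ Pi.single b 1 ∈ ℝ ∙ (1 : ι → ℝ) := hrange ▸ LinearMap.mem_range_self _ _
    obtain ⟨c, hc⟩ := Submodule.mem_span_singleton.mp this
    exact ⟨c, fun x => by simpa [mulVec_single_one] using (congrFun hc x).symm⟩
  have hcol := sum_col_of_mem_doublyStochastic hA b
  simp only [hc, Finset.sum_const, Finset.card_univ, nsmul_eq_mul] at hcol
  rw [averagingMatrix, of_apply, hc, eq_inv_of_mul_eq_one_right hcol]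

theorem exists_eq_two_pow_of_inv_mem_dyadic {n : ℕ} (hn : n ≠ 0) (h : (n : ℝ)⁻¹ ∈ dyadic) :
    ∃ m, n = 2 ^ m := by
  obtain ⟨k, a, ha⟩ := h
  have hn' : (n : ℝ) ≠ 0 := Nat.cast_ne_zero.mpr hn
  have hpow : (2 : ℝ) ^ k = n * a := by rw [← ha, ← mul_assoc, mul_inv_cancel₀ hn', one_mul]
  have hdvd : (n : ℤ) ∣ 2 ^ k := ⟨a, by exact_mod_cast hpow⟩
  obtain ⟨m, -, hm⟩ := (Nat.dvd_prime_pow Nat.prime_two).mp (by exact_mod_cast hdvd)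
  exact ⟨m, hm⟩

theorem exists_card_eq_two_pow_of_mem_gossipMonoid_of_rank_eq_one {A : Matrix ι ι ℝ}
    (hA : A ∈ gossipMonoid ι) (hrank : A.rank = 1) : ∃ m, Fintype.card ι = 2 ^ m := by
  obtain ⟨hstoch, hdyadic⟩ := gossipMonoid_le_doublyStochastic_inf_dyadic hA
  have : Nonempty ι := Fintype.card_pos_iff.mp (by have := A.rank_le_card_width; omega)
  rw [eq_averagingMatrix_of_rank_eq_one hstoch hrank] at hdyadic
  exact exists_eq_two_pow_of_inv_mem_dyadic Fintype.card_ne_zero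
    (hdyadic (Classical.arbitrary ι) (Classical.arbitrary ι))

end Necessity

section Sufficiency

variable {ι κ : Type*} [Fintype ι] [DecidableEq ι] [Fintype κ] [DecidableEq κ]

theorem gossip_mem_gossipMonoid (i j : ι) : gossip i j ∈ gossipMonoid ι :=
  Submonoid.subset_closure ⟨(i, j), rfl⟩

theorem map_mem_of_mem_gossipMonoid {M : Type*} [Monoid M] {f : Matrix ι ι ℝ →* M}
    {S : Submonoid M} (hf : ∀ i j, f (gossip i j) ∈ S) {A : Matrix ι ι ℝ}
    (hA : A ∈ gossipMonoid ι) : f A ∈ S := by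
  have : gossipMonoid ι ≤ S.comap f := Submonoid.closure_le.mpr <|
    Set.range_subset_iff.mpr fun p => Submonoid.mem_comap.mpr (hf p.1 p.2)
  exact this hA

theorem reindex_mem_gossipMonoid (e : ι ≃ κ) {A : Matrix ι ι ℝ} (hA : A ∈ gossipMonoid ι) :
    reindex e e A ∈ gossipMonoid κ :=
  map_mem_of_mem_gossipMonoid (f := (reindexRingEquiv ℝ e : Matrix ι ι ℝ →* Matrix κ κ ℝ))
    (fun i j => by
      change reindex e e (gossip i j) ∈ _
      rw [reindex_gossip]
      exact gossip_mem_gossipMonoid _ _) hA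

theorem blockDiagonal_mulSingle_mem_gossipMonoid (k : κ) {A : Matrix ι ι ℝ}
    (hA : A ∈ gossipMonoid ι) : blockDiagonal (Pi.mulSingle k A) ∈ gossipMonoid (ι × κ) :=
  map_mem_of_mem_gossipMonoid (S := gossipMonoid (ι × κ))
    (f := (blockDiagonalRingHom ι κ ℝ).toMonoidHom.comp
      (MonoidHom.mulSingle (fun _ : κ => Matrix ι ι ℝ) k))
    (fun i j => by
      change blockDiagonal (Pi.mulSingle k (gossip i j)) ∈ _
      rw [← gossip_prodMk]
      exact gossip_mem_gossipMonoid _ _) hA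

theorem blockDiagonal_mem_gossipMonoid {F : κ → Matrix ι ι ℝ} (hF : ∀ k, F k ∈ gossipMonoid ι) :
    blockDiagonal F ∈ gossipMonoid (ι × κ) :=
  Submonoid.pi_mem_of_mulSingle_mem (η := κ)
    (H := (gossipMonoid (ι × κ)).comap (blockDiagonalRingHom ι κ ℝ).toMonoidHom) F
    fun k => blockDiagonal_mulSingle_mem_gossipMonoid k (hF k)

theorem kronecker_mem_gossipMonoid {A : Matrix ι ι ℝ} {B : Matrix κ κ ℝ}
    (hA : A ∈ gossipMonoid ι) (hB : B ∈ gossipMonoid κ) : A ⊗ₖ B ∈ gossipMonoid (ι × κ) := by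
  have hA1 : A ⊗ₖ (1 : Matrix κ κ ℝ) ∈ gossipMonoid (ι × κ) := by
    rw [kronecker_one]
    exact blockDiagonal_mem_gossipMonoid fun _ => hA
  have h1B : (1 : Matrix ι ι ℝ) ⊗ₖ B ∈ gossipMonoid (ι × κ) := by
    rw [one_kronecker]
    exact reindex_mem_gossipMonoid _ (blockDiagonal_mem_gossipMonoid fun _ => hB)
  simpa only [← mul_kronecker_mul, one_mul, mul_one] using mul_mem h1B hA1

theorem averagingMatrix_mem_gossipMonoid {m : ℕ} (h : Fintype.card ι = 2 ^ m) :
    averagingMatrix ι ∈ gossipMonoid ι := by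
  suffices hfin : ∀ m, averagingMatrix (Fin (2 ^ m)) ∈ gossipMonoid (Fin (2 ^ m)) by
    rw [← reindex_averagingMatrix (Fintype.equivFinOfCardEq h).symm]
    exact reindex_mem_gossipMonoid _ (hfin m)
  intro m
  induction m with
  | zero =>
    change averagingMatrix (Fin 1) ∈ gossipMonoid (Fin 1)
    convert one_mem (gossipMonoid (Fin 1)) using 1
    ext a b
    simp [averagingMatrix, Subsingleton.elim a b, one_apply]
  | succ m ih =>
    rw [← reindex_averagingMatrix (finProdFinEquiv.trans (finCongr (pow_succ 2 m).symm)),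
      ← averagingMatrix_kronecker]
    exact reindex_mem_gossipMonoid _ (kronecker_mem_gossipMonoid ih
      (averagingMatrix_fin_two ▸ gossip_mem_gossipMonoid 0 1))

end Sufficiency

theorem stmt_0_general (n : ℕ) :
    (∃ t : ℕ, 1 ≤ t ∧ ∃ P : Fin t → Matrix (Fin n) (Fin n) ℝ,
        (∀ k, ∃ i j, P k = gossipM n i j) ∧
        ((List.ofFn P).reverse.prod).rank = 1) ↔
      ∃ m : ℕ, n = 2 ^ m := by
  constructor
  · rintro ⟨t, -, P, hP, hrank⟩
    have hmem : (List.ofFn P).reverse.prod ∈ gossipMonoid (Fin n) := by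
      refine Submonoid.list_prod_mem _ fun A hA => ?_
      obtain ⟨k, rfl⟩ := List.mem_ofFn.mp (List.mem_reverse.mp hA)
      obtain ⟨i, j, hk⟩ := hP k
      rw [hk, gossipM_eq_gossip]
      exact gossip_mem_gossipMonoid i j
    simpa using exists_card_eq_two_pow_of_mem_gossipMonoid_of_rank_eq_one hmem hrank
  · rintro ⟨m, rfl⟩
    obtain ⟨l, hl, hprod⟩ := Submonoid.exists_list_of_mem_closure
      (averagingMatrix_mem_gossipMonoid (Fintype.card_fin (2 ^ m)))
    have i₀ : Fin (2 ^ m) := ⟨0, by positivity⟩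
    -- `M_{i₀ i₀} = 1` pads the product so that `t ≥ 1`.
    let L := gossip i₀ i₀ :: l.reverse
    refine ⟨L.length, by simp [L], L.get, fun k => ?_, ?_⟩
    · rcases List.mem_cons.mp (List.get_mem L k) with h | h
      · exact ⟨i₀, i₀, h⟩
      · obtain ⟨p, hp⟩ := hl _ (List.mem_reverse.mp h)
        exact ⟨p.1, p.2, hp.symm⟩
    · rw [List.ofFn_get]
      simp [L, hprod, gossip_self, rank_averagingMatrix]

theorem stmt_0 (n : ℕ) (hn : 1 ≤ n) :
    (∃ t : ℕ, 1 ≤ t ∧ ∃ P : Fin t → Matrix (Fin n) (Fin n) ℝ,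
        (∀ k, ∃ i j, P k = gossipM n i j) ∧
        ((List.ofFn P).reverse.prod).rank = 1) ↔
      ∃ m : ℕ, n = 2 ^ m :=
  stmt_0_general n
end

section
/- Let n = 2^m with m ≥ 0 an integer. Then the minimum, over all integers t ≥ 1 and all P_0, …, P_{t−1} ∈ 𝓜_n with rank(P_{t−1}⋯P_0) = 1, of the number of node updates Σ_{k=0}^{t−1} ‖I_n − P_k‖_1 equals m·n. -/
open Matrix

/-!
Lower bound: all products of gossip matrices are doubly stochastic, and a doubly stochastic
matrix of rank one is `J / n`. Track the entropy `∑ negMulLog` of the entries of the product.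
A gossip step on nodes `i ≠ j` replaces rows `i` and `j` by their average; since `negMulLog` is
subadditive, this raises the entropy by at most `2 log 2`, that is `log 2` per node update.
Starting from `I` (entropy `0`) and ending at `J / n` (entropy `n log n`) therefore costs at least
`n log₂ n` node updates.

Upper bound: label the nodes by `{0,1}^m`. In round `r`, every node gossips with its neighbour
across coordinate `r`. This turns the average over the subcubes spanned by the coordinates
already used into the average over the subcubes that also contain direction `r`. After `m` rounds
of `n / 2` gossips each, the product is `J / n`, at a cost of `m n` node updates.
-/

open Finset Real

namespace Real

theorem negMulLog_add_le {a b : ℝ} (ha : 0 ≤ a) (hb : 0 ≤ b) :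
    negMulLog (a + b) ≤ negMulLog a + negMulLog b := by
  have hmono : ∀ c, 0 ≤ c → c ≤ a + b → c * log c ≤ c * log (a + b) := by
    intro c hc hcab
    rcases hc.eq_or_lt with rfl | hc
    · simp
    · exact mul_le_mul_of_nonneg_left (log_le_log hc hcab) hc.le
  simp only [negMulLog, neg_mul]
  linarith [hmono a ha (by linarith), hmono b hb (by linarith)]

theorem two_mul_negMulLog_half_add_le {a b : ℝ} (ha : 0 ≤ a) (hb : 0 ≤ b) :
    2 * negMulLog ((a + b) / 2) ≤ negMulLog a + negMulLog b + (a + b) * log 2 := by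
  have hhalf : negMulLog ((a + b) / 2) = (negMulLog (a + b) + (a + b) * log 2) / 2 := by
    rw [div_eq_mul_inv, negMulLog_mul]
    simp only [negMulLog, log_inv]
    ring
  rw [hhalf]
  linarith [negMulLog_add_le ha hb]

end Real

namespace Gossip

section Uniform

variable {ι κ : Type*} [Fintype ι] [Fintype κ]

noncomputable def uniform (ι : Type*) [Fintype ι] : Matrix ι ι ℝ :=
  of fun _ _ => (Fintype.card ι : ℝ)⁻¹

noncomputable def entropy (A : Matrix ι ι ℝ) : ℝ := ∑ x, ∑ y, negMulLog (A x y)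

theorem reindex_uniform (e : ι ≃ κ) : reindex e e (uniform ι) = uniform κ := by
  ext x y
  simp [uniform, Fintype.card_congr e]

theorem entropy_uniform : entropy (uniform ι) = Fintype.card ι * log (Fintype.card ι) := by
  simp only [entropy, uniform, of_apply, sum_const, card_univ, nsmul_eq_mul, negMulLog, log_inv]
  rcases eq_or_ne (Fintype.card ι : ℝ) 0 with h | h
  · simp [h]
  · field_simp

theorem rank_eq_one_iff_of_mulVec_one [Nonempty ι] {A : Matrix ι ι ℝ} (hA : A *ᵥ 1 = 1) :
    A.rank = 1 ↔ ∀ v, ∃ a : ℝ, a • 1 = A *ᵥ v := by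
  have hne : (⟨1, 1, hA⟩ : LinearMap.range A.mulVecLin) ≠ 0 := by
    simp [Subtype.ext_iff]
  rw [rank, finrank_eq_one_iff_of_nonzero' _ hne]
  constructor
  · intro h v
    obtain ⟨a, ha⟩ := h ⟨A *ᵥ v, v, rfl⟩
    exact ⟨a, congrArg Subtype.val ha⟩
  · rintro h ⟨w, v, rfl⟩
    obtain ⟨a, ha⟩ := h v
    exact ⟨a, Subtype.ext ha⟩

theorem rank_uniform [Nonempty ι] : (uniform ι).rank = 1 := by
  have hcard : (Fintype.card ι : ℝ) ≠ 0 := by positivity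
  have hmulVec : ∀ v, uniform ι *ᵥ v = ((Fintype.card ι : ℝ)⁻¹ * ∑ y, v y) • 1 := by
    intro v
    ext x
    simp [uniform, mulVec, dotProduct, mul_sum]
  rw [rank_eq_one_iff_of_mulVec_one (by simp [hmulVec, hcard])]
  exact fun v => ⟨_, (hmulVec v).symm⟩

end Uniform

variable {ι κ : Type*} [DecidableEq ι] [DecidableEq κ]

-- On `Fin n` this is definitionally `gossipM n`.
noncomputable def gossip (i j : ι) : Matrix ι ι ℝ :=
  1 - (1 / 2 : ℝ) • vecMulVec (Pi.single i 1 - Pi.single j 1) (Pi.single i 1 - Pi.single j 1)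

theorem gossip_self (i : ι) : gossip i i = 1 := by
  simp [gossip]

theorem gossip_transpose (i j : ι) : (gossip i j)ᵀ = gossip i j := by
  rw [gossip, transpose_sub, transpose_one, transpose_smul, transpose_vecMulVec]

theorem reindex_gossip (e : ι ≃ κ) (i j : ι) :
    reindex e e (gossip i j) = gossip (e i) (e j) := by
  ext x y
  simp [gossip, one_apply, vecMulVec_apply, Pi.single_apply, e.symm_apply_eq]

variable [Fintype ι] [Fintype κ]

def nodeUpdates (Q : Matrix ι ι ℝ) : ℝ := ∑ x, ∑ y, |(1 - Q) x y|

theorem gossip_mul_apply (i j : ι) (A : Matrix ι ι ℝ) (x y : ι) :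
    (gossip i j * A) x y = if x = i ∨ x = j then (A i y + A j y) / 2 else A x y := by
  rw [gossip, sub_mul, one_mul, smul_mul, vecMulVec_mul, sub_vecMul, single_one_vecMul,
    single_one_vecMul]
  simp only [Matrix.sub_apply, Matrix.smul_apply, vecMulVec_apply, Pi.sub_apply, Pi.single_apply,
    row_apply, smul_eq_mul]
  rcases eq_or_ne x i with rfl | hi <;> rcases eq_or_ne x j with rfl | hj <;> simp [*] <;> ring

theorem gossip_mulVec_one (i j : ι) : gossip i j *ᵥ 1 = 1 := by
  simp [gossip, sub_mulVec, smul_mulVec, vecMulVec_mulVec]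

theorem gossip_mem_doublyStochastic (i j : ι) : gossip i j ∈ doublyStochastic ℝ ι := by
  refine ⟨fun x y => ?_, gossip_mulVec_one i j, ?_⟩
  · rw [← mul_one (gossip i j), gossip_mul_apply]
    split_ifs <;> simp [one_apply] <;> split_ifs <;> norm_num
  · rw [← mulVec_transpose, gossip_transpose, gossip_mulVec_one]

theorem gossip_mem_rowStochastic (i j : ι) : gossip i j ∈ rowStochastic ℝ ι :=
  (mem_doublyStochastic_iff_mem_rowStochastic_and_mem_colStochastic.mp
    (gossip_mem_doublyStochastic i j)).1

theorem list_prod_mem_of_forall_gossip {S : Submonoid (Matrix ι ι ℝ)}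
    (hS : ∀ i j : ι, gossip i j ∈ S) {L : List (Matrix ι ι ℝ)}
    (hL : ∀ Q ∈ L, ∃ i j, Q = gossip i j) : L.prod ∈ S :=
  Submonoid.list_prod_mem _ fun Q hQ => by
    obtain ⟨i, j, rfl⟩ := hL Q hQ
    exact hS i j

theorem nodeUpdates_gossip_of_ne {i j : ι} (hij : i ≠ j) : nodeUpdates (gossip i j) = 2 := by
  have habs : ∀ x, |(Pi.single i 1 - Pi.single j 1 : ι → ℝ) x|
      = (Pi.single i 1 + Pi.single j 1 : ι → ℝ) x := by
    intro x
    by_cases hi : x = i <;> by_cases hj : x = j <;> simp [Pi.single_apply, hi, hj] <;> simp_all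
  simp only [nodeUpdates, gossip, sub_sub_cancel, Matrix.smul_apply, vecMulVec_apply, smul_eq_mul,
    abs_mul, habs]
  simp [← mul_sum, ← sum_mul, sum_add_distrib]
  norm_num

theorem nodeUpdates_reindex (e : ι ≃ κ) (Q : Matrix ι ι ℝ) :
    nodeUpdates (reindex e e Q) = nodeUpdates Q := by
  have h : ∀ x y, (1 - reindex e e Q) x y = (1 - Q) (e.symm x) (e.symm y) := by
    intro x y
    simp [one_apply]
  simp only [nodeUpdates, h]
  rw [e.symm.sum_comp (fun x => ∑ y, |(1 - Q) x (e.symm y)|)]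
  exact sum_congr rfl fun x _ => e.symm.sum_comp (fun y => |(1 - Q) x y|)

theorem entropy_one : entropy (1 : Matrix ι ι ℝ) = 0 := by
  simp [entropy, one_apply, apply_ite]

theorem entropy_gossip_mul_le {A : Matrix ι ι ℝ} (hA : A ∈ rowStochastic ℝ ι) (i j : ι) :
    entropy (gossip i j * A) ≤ entropy A + nodeUpdates (gossip i j) * log 2 := by
  rcases eq_or_ne i j with rfl | hij
  · simp [gossip_self, nodeUpdates]
  have hdiff : entropy (gossip i j * A) - entropy A =
      ∑ y, (2 * negMulLog ((A i y + A j y) / 2) - negMulLog (A i y) - negMulLog (A j y)) := by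
    rw [entropy, entropy, ← sum_sub_distrib, Fintype.sum_eq_add i j hij]
    · simp only [gossip_mul_apply, true_or, or_true, if_true, ← sum_sub_distrib,
        ← sum_add_distrib]
      exact sum_congr rfl fun y _ => by ring
    · rintro x ⟨hi, hj⟩
      simp [gossip_mul_apply, hi, hj]
  have hstep : ∑ y, (2 * negMulLog ((A i y + A j y) / 2) - negMulLog (A i y) - negMulLog (A j y))
      ≤ ∑ y, (A i y + A j y) * log 2 :=
    sum_le_sum fun y _ => by
      linarith [two_mul_negMulLog_half_add_le (nonneg_of_mem_rowStochastic hA (i := i) (j := y))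
        (nonneg_of_mem_rowStochastic hA (i := j) (j := y))]
  rw [← sum_mul, sum_add_distrib, sum_row_of_mem_rowStochastic hA,
    sum_row_of_mem_rowStochastic hA] at hstep
  rw [nodeUpdates_gossip_of_ne hij]
  linarith

theorem eq_uniform_of_rank_eq_one {A : Matrix ι ι ℝ} (hA : A ∈ doublyStochastic ℝ ι)
    (hrank : A.rank = 1) : A = uniform ι := by
  have : Nonempty ι := Fintype.card_pos_iff.mp (by have := rank_le_card_width A; omega)
  ext x y
  obtain ⟨a, ha⟩ := (rank_eq_one_iff_of_mulVec_one (mulVec_one_of_mem_doublyStochastic hA)).mp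
    hrank (Pi.single y 1)
  have hcol : ∀ x, A x y = a := fun x => by simpa using (congrFun ha x).symm
  have hsum := sum_col_of_mem_doublyStochastic hA y
  simp only [hcol, sum_const, card_univ, nsmul_eq_mul] at hsum
  simp [uniform, hcol, eq_inv_of_mul_eq_one_right hsum]

def GossipReachable (A B : Matrix ι ι ℝ) (c : ℝ) : Prop :=
  ∃ L : List (Matrix ι ι ℝ), (∀ Q ∈ L, ∃ i j, Q = gossip i j) ∧
    L.prod * A = B ∧ (L.map nodeUpdates).sum = c

namespace GossipReachable

variable {A B C : Matrix ι ι ℝ} {c d : ℝ}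

theorem refl (A : Matrix ι ι ℝ) : GossipReachable A A 0 :=
  ⟨[], by simp, by simp, by simp⟩

theorem gossip_mul (i j : ι) (A : Matrix ι ι ℝ) :
    GossipReachable A (gossip i j * A) (nodeUpdates (gossip i j)) :=
  ⟨[gossip i j], by simp, by simp, by simp⟩

theorem trans (hAB : GossipReachable A B c) (hBC : GossipReachable B C d) :
    GossipReachable A C (c + d) := by
  obtain ⟨L₁, hL₁, rfl, rfl⟩ := hAB
  obtain ⟨L₂, hL₂, rfl, rfl⟩ := hBC
  refine ⟨L₂ ++ L₁, fun Q hQ => ?_, by simp [Matrix.mul_assoc], by simp [add_comm]⟩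
  rcases List.mem_append.mp hQ with hQ | hQ
  exacts [hL₂ Q hQ, hL₁ Q hQ]

theorem reindex (e : ι ≃ κ) (h : GossipReachable A B c) :
    GossipReachable (reindex e e A) (reindex e e B) c := by
  obtain ⟨L, hL, rfl, rfl⟩ := h
  refine ⟨L.map (reindex e e), fun Q' hQ' => ?_, ?_, ?_⟩
  · obtain ⟨Q, hQ, rfl⟩ := List.mem_map.mp hQ'
    obtain ⟨i, j, rfl⟩ := hL Q hQ
    exact ⟨e i, e j, reindex_gossip e i j⟩
  · have hmap := map_list_prod (reindexAlgEquiv ℝ ℝ e) L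
    simp only [coe_reindexAlgEquiv] at hmap
    rw [← hmap]
    exact (map_mul (reindexAlgEquiv ℝ ℝ e) _ _).symm
  · rw [List.map_map]
    exact congrArg List.sum (List.map_congr_left fun Q _ => nodeUpdates_reindex e Q)

theorem of_list_ofFn {t : ℕ} {P : Fin t → Matrix ι ι ℝ} (hP : ∀ k, ∃ i j, P k = gossip i j) :
    GossipReachable 1 (List.ofFn P).reverse.prod (∑ k, nodeUpdates (P k)) := by
  refine ⟨(List.ofFn P).reverse, fun Q hQ => ?_, mul_one _, ?_⟩
  · obtain ⟨k, rfl⟩ := List.mem_ofFn.mp (List.mem_reverse.mp hQ)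
    exact hP k
  · rw [List.map_reverse, List.sum_reverse, List.map_ofFn, List.sum_ofFn]
    rfl

theorem exists_list_ofFn [Nonempty ι] (h : GossipReachable 1 B c) :
    ∃ t, 1 ≤ t ∧ ∃ P : Fin t → Matrix ι ι ℝ, (∀ k, ∃ i j, P k = gossip i j) ∧
      (List.ofFn P).reverse.prod = B ∧ c = ∑ k, nodeUpdates (P k) := by
  obtain ⟨L, hL, rfl, rfl⟩ := h
  obtain ⟨x⟩ := ‹Nonempty ι›
  -- the identity `gossip x x` pads the schedule, so that `t ≥ 1` even when `L = []`
  set L' := L ++ [gossip x x]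
  refine ⟨L'.reverse.length, by simp [L'], L'.reverse.get, fun k => ?_, ?_, ?_⟩
  · rcases List.mem_append.mp (List.mem_reverse.mp (List.get_mem L'.reverse k)) with hk | hk
    · exact hL _ hk
    · exact ⟨x, x, List.mem_singleton.mp hk⟩
  · rw [List.ofFn_get, List.reverse_reverse]
    simp [L', gossip_self]
  · rw [← List.sum_ofFn, ← Function.comp_def, ← List.map_ofFn, List.ofFn_get]
    simp [L', gossip_self, nodeUpdates]

theorem mem_doublyStochastic (h : GossipReachable A B c) (hA : A ∈ doublyStochastic ℝ ι) :
    B ∈ doublyStochastic ℝ ι := by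
  obtain ⟨L, hL, rfl, -⟩ := h
  exact mul_mem (list_prod_mem_of_forall_gossip gossip_mem_doublyStochastic hL) hA

theorem entropy_le (h : GossipReachable A B c) (hA : A ∈ rowStochastic ℝ ι) :
    entropy B ≤ entropy A + c * log 2 := by
  obtain ⟨L, hL, rfl, rfl⟩ := h
  induction L with
  | nil => simp
  | cons Q L ih =>
    obtain ⟨i, j, rfl⟩ := hL Q List.mem_cons_self
    have hL' : ∀ R ∈ L, ∃ i j, R = gossip i j := fun R hR => hL R (List.mem_cons_of_mem _ hR)
    have hLA : L.prod * A ∈ rowStochastic ℝ ι :=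
      mul_mem (list_prod_mem_of_forall_gossip gossip_mem_rowStochastic hL') hA
    rw [List.prod_cons, Matrix.mul_assoc, List.map_cons, List.sum_cons]
    linarith [entropy_gossip_mul_le hLA i j, ih hL']

theorem card_mul_logb_card_le (h : GossipReachable 1 B c) (hB : B.rank = 1) :
    Fintype.card ι * logb 2 (Fintype.card ι) ≤ c := by
  have hentropy := h.entropy_le (one_mem _)
  rw [eq_uniform_of_rank_eq_one (h.mem_doublyStochastic (one_mem _)) hB, entropy_uniform,
    entropy_one, zero_add] at hentropy
  rw [logb, ← mul_div_assoc, div_le_iff₀ (log_pos one_lt_two)]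
  exact hentropy

end GossipReachable

section Cube

open Function

variable {σ : Type*} [DecidableEq σ]

theorem forall_notMem_update_eq_iff {S : Finset σ} {r : σ} (hr : r ∉ S) (x y : σ → Bool)
    (v : Bool) :
    (∀ b ∉ S, update x r v b = y b) ↔ v = y r ∧ ∀ b ∉ insert r S, x b = y b := by
  constructor
  · intro h
    refine ⟨by simpa using h r hr, fun b hb => ?_⟩
    rw [mem_insert, not_or] at hb
    simpa [update_of_ne hb.1] using h b hb.2
  · rintro ⟨rfl, h⟩ b hb
    rcases eq_or_ne b r with rfl | hbr
    · simp
    · rw [update_of_ne hbr]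
      exact h b (by simp [hbr, hb])

theorem update_false_eq_iff {r : σ} {a : σ → Bool} (ha : a r = false) (x : σ → Bool) :
    update x r false = a ↔ x = a ∨ x = update a r true := by
  constructor
  · rintro rfl
    cases hx : x r
    · left
      simp [← hx]
    · right
      simp [← hx]
  · rintro (rfl | rfl)
    · simp [← ha]
    · simp [← ha]

variable [Fintype σ]

noncomputable def subcubeAvg (S : Finset σ) : Matrix (σ → Bool) (σ → Bool) ℝ :=
  of fun x y => if ∀ b ∉ S, x b = y b then ((2 : ℝ) ^ #S)⁻¹ else 0

theorem subcubeAvg_empty : subcubeAvg (∅ : Finset σ) = 1 := by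
  ext x y
  simp [subcubeAvg, one_apply, funext_iff]

theorem subcubeAvg_univ : subcubeAvg (univ : Finset σ) = uniform (σ → Bool) := by
  ext x y
  simp [subcubeAvg, uniform]

theorem subcubeAvg_insert_apply {S : Finset σ} {r : σ} (hr : r ∉ S) (x y : σ → Bool) :
    subcubeAvg (insert r S) x y =
      (subcubeAvg S (update x r false) y + subcubeAvg S (update x r true) y) / 2 := by
  simp only [subcubeAvg, of_apply, forall_notMem_update_eq_iff hr, card_insert_of_notMem hr,
    pow_succ]
  by_cases hP : ∀ b ∉ insert r S, x b = y b
  · cases y r <;> simp only [eq_true hP, and_true, if_true] <;> norm_num <;> ring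
  · simp only [eq_false hP, and_false, if_false]
    norm_num

theorem two_mul_card_filter_eq_false (r : σ) :
    2 * #({x | x r = false} : Finset (σ → Bool)) = Fintype.card (σ → Bool) := by
  have hsplit := card_filter_add_card_filter_not (s := univ) (fun x : σ → Bool => x r = false)
  have hflip : #({x | x r = false} : Finset (σ → Bool)) =
      #({x | ¬x r = false} : Finset (σ → Bool)) := by
    apply card_nbij' (fun x => update x r true) (fun x => update x r false) <;> intro x hx <;>
      simp_all [update_idem]
  rw [card_univ] at hsplit
  omega

-- The state of round `r` once every edge `{a, update a r true}` with `a ∈ T` has gossiped.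
noncomputable def partialRound (S : Finset σ) (r : σ) (T : Finset (σ → Bool)) :
    Matrix (σ → Bool) (σ → Bool) ℝ :=
  of fun x y => if update x r false ∈ T then subcubeAvg (insert r S) x y else subcubeAvg S x y

theorem gossip_mul_partialRound {S : Finset σ} {r : σ} (hr : r ∉ S) {T : Finset (σ → Bool)}
    {a : σ → Bool} (ha : a r = false) (haT : a ∉ T) :
    gossip a (update a r true) * partialRound S r T = partialRound S r (insert a T) := by
  ext x y
  have hself : update a r false = a := by simp [← ha]
  rw [gossip_mul_apply]
  by_cases hx : update x r false = a
  · have hup : update x r true = update a r true := by rw [← hx, update_idem]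
    rw [if_pos ((update_false_eq_iff ha x).mp hx)]
    simp [partialRound, hx, hup, hself, haT, subcubeAvg_insert_apply hr]
  · rw [if_neg (mt (update_false_eq_iff ha x).mpr hx)]
    simp [partialRound, hx]

theorem gossipReachable_subcubeAvg_insert {S : Finset σ} {r : σ} (hr : r ∉ S) :
    GossipReachable (subcubeAvg S) (subcubeAvg (insert r S)) (Fintype.card (σ → Bool)) := by
  set F : Finset (σ → Bool) := {x | x r = false}
  have hround : ∀ T ⊆ F, GossipReachable (subcubeAvg S) (partialRound S r T) (2 * #T) := by
    intro T hT
    induction T using Finset.induction_on with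
    | empty =>
      have hempty : partialRound S r ∅ = subcubeAvg S := by
        ext x y
        simp [partialRound]
      simpa [hempty] using GossipReachable.refl (subcubeAvg S)
    | insert a T haT ih =>
      have ha : a r = false := by simpa [F] using hT (mem_insert_self a T)
      have hne : a ≠ update a r true := fun h => by simpa [ha] using congrFun h r
      rw [← gossip_mul_partialRound hr ha haT, card_insert_of_notMem haT]
      convert (ih ((subset_insert a T).trans hT)).trans
        (GossipReachable.gossip_mul a (update a r true) _) using 1
      rw [nodeUpdates_gossip_of_ne hne]
      push_cast
      ring
  have hfull : partialRound S r F = subcubeAvg (insert r S) := by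
    ext x y
    simp [partialRound, F]
  rw [← hfull, ← two_mul_card_filter_eq_false r]
  exact_mod_cast hround F subset_rfl

theorem gossipReachable_subcubeAvg (S : Finset σ) :
    GossipReachable 1 (subcubeAvg S) (#S * Fintype.card (σ → Bool)) := by
  induction S using Finset.induction_on with
  | empty => simpa [subcubeAvg_empty] using GossipReachable.refl (1 : Matrix (σ → Bool) _ ℝ)
  | insert r S hr ih =>
    convert ih.trans (gossipReachable_subcubeAvg_insert hr) using 1
    rw [card_insert_of_notMem hr]
    push_cast
    ring

end Cube

theorem gossipReachable_uniform_of_card_eq {m : ℕ} (h : Fintype.card κ = 2 ^ m) :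
    GossipReachable 1 (uniform κ) (m * 2 ^ m) := by
  have hcard : Fintype.card (Fin m → Bool) = Fintype.card κ := by simp [h]
  have hcube := gossipReachable_subcubeAvg (univ : Finset (Fin m))
  rw [subcubeAvg_univ, card_univ, Fintype.card_fin, hcard, h] at hcube
  have hreindexed := hcube.reindex (Fintype.equivOfCardEq hcard)
  rw [reindex_uniform, reindex_apply, submatrix_one_equiv] at hreindexed
  exact_mod_cast hreindexed

end Gossip

theorem stmt_1 (m n : ℕ) (hn : n = 2 ^ m) :
    IsLeast
      { c : ℝ | ∃ t : ℕ, 1 ≤ t ∧ ∃ P : Fin t → Matrix (Fin n) (Fin n) ℝ,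
          (∀ k, ∃ i j, P k = gossipM n i j) ∧
          ((List.ofFn P).reverse.prod).rank = 1 ∧
          c = ∑ k, ∑ i, ∑ j, |(1 - P k) i j| }
      ((m * n : ℕ) : ℝ) := by
  subst hn
  refine ⟨?_, ?_⟩
  · obtain ⟨t, ht, P, hP, hprod, hcost⟩ :=
      (Gossip.gossipReachable_uniform_of_card_eq (Fintype.card_fin (2 ^ m))).exists_list_ofFn
    refine ⟨t, ht, P, hP, hprod ▸ Gossip.rank_uniform, ?_⟩
    change _ = ∑ k, Gossip.nodeUpdates (P k)
    rw [← hcost]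
    push_cast
    ring
  · rintro c ⟨t, -, P, hP, hrank, rfl⟩
    have h := (Gossip.GossipReachable.of_list_ofFn hP).card_mul_logb_card_le hrank
    rw [Fintype.card_fin, Nat.cast_pow, Nat.cast_ofNat, Real.logb_pow,
      Real.logb_self_eq_one one_lt_two, mul_one] at h
    change _ ≤ ∑ k, Gossip.nodeUpdates (P k)
    push_cast
    linarith
end

section
/- Let n = 2^m with m ≥ 1 an integer. Then any matrices P_0, …, P_{t−1} ∈ 𝓜_n (t ≥ 1) with rank(P_{t−1}⋯P_0) = 1 satisfy Σ_{k=0}^{t−1} ‖I_n − P_k‖_1 ≥ m·n; in particular, since each nontrivial matrix in 𝓜_n updates exactly two nodes, at least m·n/2 nontrivial gossip steps are required to reach finite-time consensus. -/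
/-!
Track the potential `Φ(A) = ∏ₐ max_b A_ab` along the products `P_k ⋯ P_0`. Left
multiplication by a nonnegative matrix `M` multiplies each row maximum by at least the
diagonal entry `M_aa`, and a nontrivial gossip matrix has exactly two diagonal entries `1/2`,
the others being `1`; so each nontrivial step divides `Φ` by at most `4`, starting from
`Φ(I) = 1`. Products of gossip matrices are doubly stochastic, and a doubly stochastic matrix
of rank one is `J/n`, for which `Φ = n⁻ⁿ = 2^(-mn)`. Hence `4^(-N) ≤ 2^(-mn)` for the number
`N` of nontrivial steps.
-/

open Matrix

section Gossip

variable {n : ℕ}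

theorem gossipM_eq_half_smul (i j : Fin n) :
    gossipM n i j = (1/2 : ℝ) • (1 + (Equiv.swap i j).permMatrix ℝ) := by
  ext a b
  simp only [gossipM, Matrix.sub_apply, Matrix.add_apply, Matrix.smul_apply, one_apply,
    vecMulVec_apply, Pi.sub_apply, Pi.single_apply, smul_eq_mul, PEquiv.toMatrix_apply,
    Equiv.toPEquiv_apply, Equiv.swap_apply_def, Option.mem_def, Option.some.injEq]
  split_ifs <;> grind

theorem gossipM_mem_doublyStochastic (i j : Fin n) :
    gossipM n i j ∈ doublyStochastic ℝ (Fin n) := by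
  rw [gossipM_eq_half_smul, smul_add]
  exact convex_doublyStochastic (one_mem _) permMatrix_mem_doublyStochastic
    (by norm_num) (by norm_num) (by norm_num)

theorem gossipM_self (i : Fin n) : gossipM n i i = 1 := by simp [gossipM]

theorem gossipM_ne_one {i j : Fin n} (h : i ≠ j) : gossipM n i j ≠ 1 := fun h1 => by
  simpa [gossipM, vecMulVec_apply, h, h.symm] using congrFun₂ h1 i j

theorem prod_diag_gossipM {i j : Fin n} (h : i ≠ j) : ∏ a, gossipM n i j a a = 1 / 4 := by
  rw [Fintype.prod_eq_mul i j h]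
  · norm_num [gossipM, vecMulVec_apply, h, h.symm]
  · intro a ha
    simp [gossipM, vecMulVec_apply, ha.1, ha.2]

theorem sum_abs_one_sub_gossipM {i j : Fin n} (h : i ≠ j) :
    ∑ a, ∑ b, |(1 - gossipM n i j) a b| = 2 := by
  set u : Fin n → ℝ := Pi.single i 1 - Pi.single j 1
  have hu : ∑ a, |u a| = 2 := by
    rw [Fintype.sum_eq_add i j h]
    · norm_num [u, h, h.symm]
    · intro a ha
      simp [u, ha.1, ha.2]
  simp only [gossipM, sub_sub_cancel, Matrix.smul_apply, vecMulVec_apply, smul_eq_mul, abs_mul,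
    ← Finset.mul_sum, ← Finset.sum_mul]
  rw [hu]
  norm_num

theorem prod_diag_of_exists_eq_gossipM {M : Matrix (Fin n) (Fin n) ℝ}
    (hM : ∃ i j, M = gossipM n i j) : ∏ a, M a a = if M ≠ 1 then 1 / 4 else 1 := by
  obtain ⟨i, j, rfl⟩ := hM
  rcases eq_or_ne i j with rfl | hij
  · simp [gossipM_self]
  · rw [if_pos (gossipM_ne_one hij), prod_diag_gossipM hij]

theorem sum_abs_one_sub_of_exists_eq_gossipM {M : Matrix (Fin n) (Fin n) ℝ}
    (hM : ∃ i j, M = gossipM n i j) : ∑ a, ∑ b, |(1 - M) a b| = if M ≠ 1 then 2 else 0 := by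
  obtain ⟨i, j, rfl⟩ := hM
  rcases eq_or_ne i j with rfl | hij
  · simp [gossipM_self]
  · rw [if_pos (gossipM_ne_one hij), sum_abs_one_sub_gossipM hij]

end Gossip

namespace Matrix

variable {ι : Type*} [Fintype ι]

noncomputable def rowMaxProd (A : Matrix ι ι ℝ) : ℝ := ∏ a, ⨆ b, A a b

theorem diag_mul_iSup_le_iSup_mul {M A : Matrix ι ι ℝ} (hM : ∀ a b, 0 ≤ M a b)
    (hA : ∀ a b, 0 ≤ A a b) (a : ι) : M a a * ⨆ b, A a b ≤ ⨆ b, (M * A) a b := by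
  have : Nonempty ι := ⟨a⟩
  obtain ⟨b, hb⟩ := exists_eq_ciSup_of_finite (f := A a)
  calc M a a * ⨆ b, A a b = M a a * A a b := by rw [hb]
    _ ≤ ∑ k, M a k * A k b :=
        Finset.single_le_sum (f := fun k => M a k * A k b)
          (fun k _ => mul_nonneg (hM a k) (hA k b)) (Finset.mem_univ a)
    _ = (M * A) a b := (mul_apply ..).symm
    _ ≤ ⨆ b, (M * A) a b := le_ciSup (f := fun b => (M * A) a b) (Finite.bddAbove_range _) b

theorem prod_diag_mul_rowMaxProd_le {M A : Matrix ι ι ℝ} (hM : ∀ a b, 0 ≤ M a b)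
    (hA : ∀ a b, 0 ≤ A a b) : (∏ a, M a a) * rowMaxProd A ≤ rowMaxProd (M * A) := by
  rw [rowMaxProd, rowMaxProd, ← Finset.prod_mul_distrib]
  refine Finset.prod_le_prod (fun a _ => mul_nonneg (hM a a) ?_)
    (fun a _ => diag_mul_iSup_le_iSup_mul hM hA a)
  have : Nonempty ι := ⟨a⟩
  exact (hA a a).trans (le_ciSup (Finite.bddAbove_range _) a)

theorem one_le_rowMaxProd_one [DecidableEq ι] : 1 ≤ rowMaxProd (1 : Matrix ι ι ℝ) :=
  Finset.one_le_prod fun a _ =>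
    have : Nonempty ι := ⟨a⟩
    (one_apply_eq a).symm.trans_le (le_ciSup (Finite.bddAbove_range _) a)

theorem rowMaxProd_of_forall_eq {A : Matrix ι ι ℝ} {c : ℝ} (h : ∀ a b, A a b = c) :
    rowMaxProd A = c ^ Fintype.card ι := by
  rw [rowMaxProd, ← Finset.card_univ, ← Finset.prod_const]
  refine Finset.prod_congr rfl fun a _ => ?_
  have : Nonempty ι := ⟨a⟩
  simp [h]

theorem prod_map_prod_diag_le_rowMaxProd_prod [DecidableEq ι] {L : List (Matrix ι ι ℝ)}
    (hL : ∀ M ∈ L, M ∈ doublyStochastic ℝ ι) :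
    (L.map fun M => ∏ a, M a a).prod ≤ rowMaxProd L.prod := by
  induction L with
  | nil => simpa using one_le_rowMaxProd_one
  | cons M L ih =>
    have hM := hL M List.mem_cons_self
    have hL' : ∀ N ∈ L, N ∈ doublyStochastic ℝ ι :=
      fun N hN => hL N (List.mem_cons_of_mem M hN)
    have hprod : L.prod ∈ doublyStochastic ℝ ι := Submonoid.list_prod_mem _ hL'
    rw [List.map_cons, List.prod_cons, List.prod_cons]
    calc (∏ a, M a a) * (L.map fun M => ∏ a, M a a).prod
        ≤ (∏ a, M a a) * rowMaxProd L.prod :=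
          mul_le_mul_of_nonneg_left (ih hL')
            (Finset.prod_nonneg fun a _ => nonneg_of_mem_doublyStochastic hM)
      _ ≤ rowMaxProd (M * L.prod) :=
          prod_diag_mul_rowMaxProd_le (fun _ _ => nonneg_of_mem_doublyStochastic hM)
            (fun _ _ => nonneg_of_mem_doublyStochastic hprod)

theorem apply_eq_inv_card_of_rank_eq_one [DecidableEq ι] {K : Type*} [Field K]
    {Q : Matrix ι ι K}
    (hQ : Q.rank = 1) (hrow : Q *ᵥ 1 = 1) (hcol : 1 ᵥ* Q = 1) (a b : ι) :
    Q a b = (Fintype.card ι : K)⁻¹ := by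
  have hone : (1 : ι → K) ≠ 0 := fun h => one_ne_zero (congrFun h a)
  have hrange : K ∙ (1 : ι → K) = LinearMap.range Q.mulVecLin := by
    refine Submodule.eq_of_le_of_finrank_le ?_ ?_
    · rw [Submodule.span_singleton_le_iff_mem]
      exact ⟨1, hrow⟩
    · rw [finrank_span_singleton hone]
      exact hQ.le
  obtain ⟨r, hr⟩ := Submodule.mem_span_singleton.1 (hrange ▸ ⟨Pi.single b 1, rfl⟩ :
    Q *ᵥ Pi.single b 1 ∈ K ∙ (1 : ι → K))
  have hcolumn : ∀ c, Q c b = r := fun c => by simpa using (congrFun hr c).symm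
  have hsum : (Fintype.card ι : K) * r = 1 := by
    simpa [vecMul, dotProduct, hcolumn] using congrFun hcol b
  rw [hcolumn, eq_inv_of_mul_eq_one_right hsum]

end Matrix

theorem stmt_2_general (m n : ℕ) (hn : n = 2 ^ m) (t : ℕ)
    (P : Fin t → Matrix (Fin n) (Fin n) ℝ)
    (hP : ∀ k, ∃ i j, P k = gossipM n i j)
    (hrank : ((List.ofFn P).reverse.prod).rank = 1) :
    ((m * n : ℕ) : ℝ) ≤ ∑ k, ∑ i, ∑ j, |(1 - P k) i j| ∧
      m * n ≤ 2 * (Finset.univ.filter fun k => P k ≠ 1).card := by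
  set N := (Finset.univ.filter fun k => P k ≠ 1).card
  set L := (List.ofFn P).reverse
  have hds : ∀ M ∈ L, M ∈ doublyStochastic ℝ (Fin n) := by
    simp only [L, List.mem_reverse, List.mem_ofFn]
    rintro _ ⟨k, rfl⟩
    obtain ⟨i, j, hk⟩ := hP k
    exact hk ▸ gossipM_mem_doublyStochastic i j
  have hLprod : L.prod ∈ doublyStochastic ℝ (Fin n) := Submonoid.list_prod_mem _ hds
  have hconst := apply_eq_inv_card_of_rank_eq_one hrank
    (mulVec_one_of_mem_doublyStochastic hLprod) (one_vecMul_of_mem_doublyStochastic hLprod)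
  have hdiag : (L.map fun M => ∏ a, M a a).prod = (1 / 2) ^ (2 * N) := by
    simp only [L, List.map_reverse, List.prod_reverse, List.map_ofFn, List.prod_ofFn,
      Function.comp_def, prod_diag_of_exists_eq_gossipM (hP _), ← Finset.prod_filter,
      Finset.prod_const, pow_mul]
    norm_num [N]
  have hfinal : rowMaxProd L.prod = (1 / 2) ^ (m * n) := by
    rw [rowMaxProd_of_forall_eq hconst, Fintype.card_fin, pow_mul, hn, Nat.cast_pow,
      Nat.cast_ofNat, one_div, ← inv_pow]
  have hcount : m * n ≤ 2 * N := by
    have hpot := prod_map_prod_diag_le_rowMaxProd_prod hds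
    rw [hdiag, hfinal] at hpot
    exact (pow_le_pow_iff_right_of_lt_one₀ (by norm_num) (by norm_num)).1 hpot
  refine ⟨?_, hcount⟩
  rw [Finset.sum_congr rfl fun k _ => sum_abs_one_sub_of_exists_eq_gossipM (hP k),
    ← Finset.sum_filter, Finset.sum_const, nsmul_eq_mul]
  exact_mod_cast hcount.trans_eq (mul_comm _ _)

theorem stmt_2 (m n : ℕ) (hm : 1 ≤ m) (hn : n = 2 ^ m) (t : ℕ) (ht : 1 ≤ t)
    (P : Fin t → Matrix (Fin n) (Fin n) ℝ)
    (hP : ∀ k, ∃ i j, P k = gossipM n i j)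
    (hrank : ((List.ofFn P).reverse.prod).rank = 1) :
    ((m * n : ℕ) : ℝ) ≤ ∑ k, ∑ i, ∑ j, |(1 - P k) i j| ∧
      m * n ≤ 2 * (Finset.univ.filter fun k => P k ≠ 1).card :=
  stmt_2_general m n hn t P hP hrank
end

section
/- Let n ≥ 2 be an integer that is not a power of two. Then the set Z = { x ∈ ℝ^n : there exist t ≥ 1 and P_0, …, P_{t−1} ∈ 𝓜_n with P_{t−1}⋯P_0 x ∈ span{1} } has Lebesgue measure zero; i.e., for almost every initial value no symmetric gossip algorithm converges in finite time. -/
/-!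
Every gossip matrix `M_{ij}` has column sums `1` and `2 • M_{ij}` has integer entries, so a
product `A` of `t` gossip matrices has column sums `1` and `2 ^ t • A` is an integer matrix.
If `A` mapped all of `ℝ^n` into the constant line, any column of it would be constant, equal
to `c` with `n c = 1`; integrality of `2 ^ t c` then forces `n ∣ 2 ^ t`. Hence, when `n` is
not a power of two, each of the countably many products sends only a proper subspace into the
constant line, and a countable union of proper subspaces is Lebesgue-null.
-/

open Matrix

open MeasureTheory

section ColumnStochasticDyadic

variable {ι : Type*} [Fintype ι]

theorem card_dvd_two_pow_of_mulVec_mem_span_one [Nonempty ι] {A : Matrix ι ι ℝ}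
    (hA : 1 ᵥ* A = 1) {k : ℕ} {C : Matrix ι ι ℤ} (hC : C.map (↑) = (2 : ℝ) ^ k • A)
    (hrange : ∀ x, A *ᵥ x ∈ Submodule.span ℝ {1}) : Fintype.card ι ∣ 2 ^ k := by
  classical
  obtain ⟨z⟩ := ‹Nonempty ι›
  obtain ⟨c, hc⟩ := Submodule.mem_span_singleton.mp (hrange (Pi.single z 1))
  have hcol : ∀ i, A i z = c := fun i => by
    simpa [mulVec_single] using (congrFun hc i).symm
  have hcard : (Fintype.card ι : ℝ) * c = 1 := by
    simpa [vecMul, dotProduct, hcol] using congrFun hA z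
  have hentry : (C z z : ℝ) = 2 ^ k * c := by
    simpa [hcol z] using congrFun (congrFun hC z) z
  have hint : (Fintype.card ι : ℤ) * C z z = 2 ^ k := by
    exact_mod_cast (show (Fintype.card ι : ℝ) * C z z = 2 ^ k by
      rw [hentry, mul_left_comm, hcard, mul_one])
  exact_mod_cast Dvd.intro _ hint

end ColumnStochasticDyadic

section Gossip

variable {n : ℕ}

theorem one_vecMul_gossipM (i j : Fin n) : 1 ᵥ* gossipM n i j = 1 := by
  set v : Fin n → ℝ := Pi.single i 1 - Pi.single j 1
  have hv : 1 ᵥ* vecMulVec v v = 0 := by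
    rw [vecMul_vecMulVec, show 1 ⬝ᵥ v = 0 by simp [v, dotProduct_sub]]
    exact zero_smul _ _
  rw [gossipM, vecMul_sub, vecMul_smul, hv, vecMul_one, smul_zero, sub_zero]

theorem exists_intMatrix_map_eq_two_smul_gossipM (i j : Fin n) :
    ∃ C : Matrix (Fin n) (Fin n) ℤ, C.map (↑) = (2 : ℝ) • gossipM n i j := by
  set v : Fin n → ℤ := Pi.single i 1 - Pi.single j 1
  refine ⟨2 - vecMulVec v v, ?_⟩
  ext a b
  simp [gossipM, v, vecMulVec_apply, Pi.single_apply, Matrix.one_apply, ofNat_apply]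
  split_ifs <;> norm_num

noncomputable def gossipProduct (w : List (Fin n × Fin n)) : Matrix (Fin n) (Fin n) ℝ :=
  (w.map fun p => gossipM n p.1 p.2).prod

theorem one_vecMul_gossipProduct (w : List (Fin n × Fin n)) : 1 ᵥ* gossipProduct w = 1 := by
  induction w with
  | nil => simp [gossipProduct]
  | cons p w ih =>
    rw [gossipProduct, List.map_cons, List.prod_cons, ← vecMul_vecMul, one_vecMul_gossipM]
    exact ih

theorem exists_intMatrix_map_eq_two_pow_smul_gossipProduct (w : List (Fin n × Fin n)) :
    ∃ C : Matrix (Fin n) (Fin n) ℤ, C.map (↑) = (2 : ℝ) ^ w.length • gossipProduct w := by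
  induction w with
  | nil => exact ⟨1, by simp [gossipProduct]⟩
  | cons p w ih =>
    obtain ⟨C, hC⟩ := ih
    obtain ⟨D, hD⟩ := exists_intMatrix_map_eq_two_smul_gossipM p.1 p.2
    refine ⟨D * C, ?_⟩
    rw [show (Int.cast : ℤ → ℝ) = Int.castRingHom ℝ from rfl] at hC hD ⊢
    rw [Matrix.map_mul, hC, hD]
    simp only [gossipProduct, List.map_cons, List.prod_cons, List.length_cons]
    rw [Matrix.mul_smul, Matrix.smul_mul, smul_smul, pow_succ]

theorem comap_span_one_gossipProduct_ne_top [NeZero n] (hnp : ¬ ∃ m : ℕ, n = 2 ^ m)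
    (w : List (Fin n × Fin n)) :
    (Submodule.span ℝ {1}).comap (gossipProduct w).mulVecLin ≠ ⊤ := by
  intro htop
  obtain ⟨C, hC⟩ := exists_intMatrix_map_eq_two_pow_smul_gossipProduct w
  have hdvd := card_dvd_two_pow_of_mulVec_mem_span_one (one_vecMul_gossipProduct w) hC
    fun x => Submodule.mem_comap.mp (htop ▸ Submodule.mem_top : x ∈ _)
  rw [Fintype.card_fin] at hdvd
  obtain ⟨m, -, hm⟩ := (Nat.dvd_prime_pow Nat.prime_two).mp hdvd
  exact hnp ⟨m, hm⟩

end Gossip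

theorem stmt_4 (n : ℕ) (hn : 2 ≤ n) (hnp : ¬ ∃ m : ℕ, n = 2 ^ m) :
    MeasureTheory.volume
      { x : Fin n → ℝ |
        ∃ t : ℕ, 1 ≤ t ∧ ∃ P : Fin t → Matrix (Fin n) (Fin n) ℝ,
          (∀ k, ∃ i j, P k = gossipM n i j) ∧
          ∃ c : ℝ, ((List.ofFn P).reverse.prod).mulVec x = fun _ => c } = 0 := by
  have : NeZero n := ⟨by omega⟩
  refine measure_mono_null (t := ⋃ w : List (Fin n × Fin n),
    ((Submodule.span ℝ {1}).comap (gossipProduct w).mulVecLin : Set (Fin n → ℝ))) ?_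
    (measure_iUnion_null fun w =>
      Measure.addHaar_submodule _ _ (comap_span_one_gossipProduct_ne_top hnp w))
  rintro x ⟨t, -, P, hP, c, hc⟩
  choose i j hij using hP
  obtain rfl : P = _ := funext hij
  have hprod : gossipProduct (List.ofFn fun k => (i k, j k)).reverse =
      (List.ofFn fun k => gossipM n (i k) (j k)).reverse.prod := by
    simp [gossipProduct, List.map_reverse, List.map_ofFn, Function.comp_def]
  refine Set.mem_iUnion.mpr ⟨(List.ofFn fun k => (i k, j k)).reverse,
    Submodule.mem_span_singleton.mpr ⟨c, ?_⟩⟩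
  rw [mulVecLin_apply, hprod, hc]
  exact funext fun _ => mul_one c
end

section
/- For every integer n ≥ 1 there exist an integer t ≥ 1 and matrices P_0, …, P_{t−1} ∈ 𝓜_n^♮ such that rank(P_{t−1}⋯P_0) = 1; that is, an asymmetric gossip algorithm with global finite-time convergence always exists, regardless of the number of nodes. -/
open Matrix

/-- The asymmetric gossip matrix `I - e_i (e_i - e_j)^T / 2`. -/
noncomputable def gossipA (n : ℕ) (i j : Fin n) : Matrix (Fin n) (Fin n) ℝ :=
  1 - (1 / 2 : ℝ) • vecMulVec (Pi.single i 1) (Pi.single i 1 - Pi.single j 1)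

/-- Membership in the set `𝓜_n^♮` of (symmetric or asymmetric) gossip matrices. -/
def memAsym (n : ℕ) (P : Matrix (Fin n) (Fin n) ℝ) : Prop :=
  ∃ i j, P = gossipM n i j ∨ P = gossipA n i j

/-!
Left multiplication by `gossipA n i j` replaces row `i` by the midpoint of rows `i` and `j`, and
`gossipM n i j` replaces both rows `i` and `j` by it. Starting from the identity, rows are merged
one at a time into a block of equal rows `w`: the new row `x_p` is moved to `μ = (x_p + w) / 2`,
every block row but one, `s₀`, is moved to `(w + μ) / 2` by asymmetric steps, and a symmetric step
finally averages `s₀` with `p`. Once all rows equal `w` the product is `𝟙 wᵀ`, of rank at most 1;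
it fixes `𝟙` because every gossip matrix does, so it is nonzero and its rank is exactly 1.
-/

section Rank

variable {m n K : Type*} [Fintype n] [Field K]

theorem Matrix.rank_pos_of_mulVec_ne_zero {Q : Matrix m n K} {v : n → K} (h : Q *ᵥ v ≠ 0) :
    0 < Q.rank :=
  Module.finrank_pos_iff_exists_ne_zero.mpr
    ⟨⟨Q *ᵥ v, v, rfl⟩, fun h0 => h (congrArg Subtype.val h0)⟩

theorem Matrix.rank_eq_one_of_row_eq {Q : Matrix m n K} {v w : n → K} (hrow : ∀ i, Q i = w)
    (h : Q *ᵥ v ≠ 0) : Q.rank = 1 := by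
  have hQ : Q = vecMulVec 1 w := by
    ext i j
    simp [vecMulVec_apply, hrow]
  have := rank_pos_of_mulVec_ne_zero h
  have := hQ ▸ rank_vecMulVec_le (1 : m → K) w
  omega

end Rank

section RowOperations

variable {n : ℕ} {m : Type*}

theorem gossipA_mul (i j : Fin n) (Q : Matrix (Fin n) m ℝ) :
    gossipA n i j * Q = Q.updateRow i (midpoint ℝ (Q i) (Q j)) := by
  rw [gossipA, Matrix.sub_mul, Matrix.one_mul, Matrix.smul_mul, vecMulVec_mul, sub_vecMul,
    single_one_vecMul, single_one_vecMul]
  ext r c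
  by_cases hr : r = i
  · subst hr
    simp [vecMulVec_apply, midpoint_eq_smul_add]
    ring
  · simp [vecMulVec_apply, hr]

theorem gossipM_mul (i j : Fin n) (Q : Matrix (Fin n) m ℝ) :
    gossipM n i j * Q =
      (Q.updateRow i (midpoint ℝ (Q i) (Q j))).updateRow j (midpoint ℝ (Q i) (Q j)) := by
  rw [gossipM, Matrix.sub_mul, Matrix.one_mul, Matrix.smul_mul, vecMulVec_mul, sub_vecMul,
    single_one_vecMul, single_one_vecMul]
  ext r c
  by_cases hrj : r = j
  · subst hrj
    by_cases hij : i = r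
    · subst hij; simp [midpoint_self]
    · simp [vecMulVec_apply, midpoint_eq_smul_add, hij]
      ring
  · by_cases hri : r = i
    · subst hri
      simp [vecMulVec_apply, midpoint_eq_smul_add, hrj]
      ring
    · simp [vecMulVec_apply, hri, hrj]

theorem gossipA_self (i : Fin n) : gossipA n i i = 1 := by
  simp [gossipA]

theorem memAsym.mulVec_one {P : Matrix (Fin n) (Fin n) ℝ} (hP : memAsym n P) : P *ᵥ 1 = 1 := by
  obtain ⟨i, j, rfl | rfl⟩ := hP <;>
    simp [gossipM, gossipA, sub_mulVec, smul_mulVec, vecMulVec_mulVec]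

end RowOperations

section Reachability

variable {n : ℕ} {m : Type*}

def GossipReachable (Q Q' : Matrix (Fin n) m ℝ) : Prop :=
  ∃ L : List (Matrix (Fin n) (Fin n) ℝ), (∀ P ∈ L, memAsym n P) ∧ Q' = L.prod * Q

namespace GossipReachable

theorem refl (Q : Matrix (Fin n) m ℝ) : GossipReachable Q Q :=
  ⟨[], by simp, by simp⟩

theorem mul_left {Q Q' : Matrix (Fin n) m ℝ} (h : GossipReachable Q Q')
    {P : Matrix (Fin n) (Fin n) ℝ} (hP : memAsym n P) : GossipReachable Q (P * Q') := by
  obtain ⟨L, hL, rfl⟩ := h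
  refine ⟨P :: L, ?_, by rw [List.prod_cons, Matrix.mul_assoc]⟩
  rintro P' (_ | ⟨_, hP'⟩)
  exacts [hP, hL P' hP']

theorem trans {Q Q' Q'' : Matrix (Fin n) m ℝ} (h : GossipReachable Q Q')
    (h' : GossipReachable Q' Q'') : GossipReachable Q Q'' := by
  obtain ⟨L, hL, rfl⟩ := h
  obtain ⟨L', hL', rfl⟩ := h'
  refine ⟨L' ++ L, ?_, by rw [List.prod_append, Matrix.mul_assoc]⟩
  simp only [List.mem_append]
  rintro P (hP | hP)
  exacts [hL' P hP, hL P hP]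

theorem updateRow_midpoint {Q Q' : Matrix (Fin n) m ℝ} (h : GossipReachable Q Q') (i j : Fin n) :
    GossipReachable Q (Q'.updateRow i (midpoint ℝ (Q' i) (Q' j))) :=
  gossipA_mul i j Q' ▸ h.mul_left ⟨i, j, .inr rfl⟩

theorem updateRow_updateRow_midpoint {Q Q' : Matrix (Fin n) m ℝ} (h : GossipReachable Q Q')
    (i j : Fin n) :
    GossipReachable Q
      ((Q'.updateRow i (midpoint ℝ (Q' i) (Q' j))).updateRow j (midpoint ℝ (Q' i) (Q' j))) :=
  gossipM_mul i j Q' ▸ h.mul_left ⟨i, j, .inl rfl⟩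

theorem midpoint_rows (Q : Matrix (Fin n) m ℝ) {p : Fin n} {T : Finset (Fin n)} (hp : p ∉ T) :
    GossipReachable Q (Matrix.of fun r => if r ∈ T then midpoint ℝ (Q r) (Q p) else Q r) := by
  induction T using Finset.induction_on with
  | empty => convert refl Q using 1; ext; simp
  | insert s T hs ih =>
    rw [Finset.mem_insert, not_or] at hp
    convert (ih hp.2).updateRow_midpoint s p using 1
    ext r c
    by_cases hr : r = s
    · simp [hr, hs]
    · simp [hr, updateRow_apply]

theorem exists_rows_eq_insert {Q : Matrix (Fin n) m ℝ} {S : Finset (Fin n)} {s₀ p : Fin n}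
    {w : m → ℝ} (hs₀ : s₀ ∈ S) (hw : ∀ s ∈ S, Q s = w) (hp : p ∉ S) :
    ∃ Q', GossipReachable Q Q' ∧ ∃ w', ∀ r ∈ insert p S, Q' r = w' := by
  have hps₀ : p ≠ s₀ := fun h => hp (h ▸ hs₀)
  set μ := midpoint ℝ (Q p) w
  set Q₁ := Q.updateRow p μ
  have hQ₁ : GossipReachable Q Q₁ := by
    simpa only [hw s₀ hs₀] using (refl Q).updateRow_midpoint p s₀
  set Q₂ := Matrix.of fun r => if r ∈ S.erase s₀ then midpoint ℝ (Q₁ r) (Q₁ p) else Q₁ r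
  have hQ₂ : GossipReachable Q Q₂ :=
    hQ₁.trans (midpoint_rows Q₁ fun h => hp (Finset.mem_of_mem_erase h))
  refine ⟨_, hQ₂.updateRow_updateRow_midpoint s₀ p, midpoint ℝ w μ, ?_⟩
  have hQ₂s₀ : Q₂ s₀ = w := by ext; simp [Q₂, Q₁, hps₀.symm, hw s₀ hs₀]
  have hQ₂p : Q₂ p = μ := by ext; simp [Q₂, Q₁, hp]
  intro r hr
  rw [hQ₂s₀, hQ₂p]
  ext c
  by_cases hrp : r = p
  · simp [hrp]
  by_cases hrs₀ : r = s₀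
  · simp [hrs₀, hps₀.symm]
  have hrS : r ∈ S := (Finset.mem_insert.mp hr).resolve_left hrp
  simp [updateRow_apply, hrp, hrs₀, hrS, Q₂, Q₁, hw r hrS]

theorem exists_rows_eq (Q : Matrix (Fin n) m ℝ) {S : Finset (Fin n)} (hS : S.Nonempty) :
    ∃ Q', GossipReachable Q Q' ∧ ∃ w, ∀ r ∈ S, Q' r = w := by
  induction hS using Finset.Nonempty.cons_induction with
  | singleton a => exact ⟨Q, refl Q, Q a, by simp⟩
  | cons p S hp hS ih =>
    obtain ⟨Q₁, hQ₁, w, hw⟩ := ih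
    obtain ⟨s₀, hs₀⟩ := hS
    obtain ⟨Q₂, hQ₂, hrows⟩ := exists_rows_eq_insert hs₀ hw hp
    exact ⟨Q₂, hQ₁.trans hQ₂, by simpa only [Finset.cons_eq_insert] using hrows⟩

end GossipReachable

end Reachability

theorem List.prod_mulVec_one_of_memAsym {n : ℕ} {L : List (Matrix (Fin n) (Fin n) ℝ)}
    (hL : ∀ P ∈ L, memAsym n P) : L.prod *ᵥ 1 = 1 := by
  induction L with
  | nil => simp
  | cons P L ih =>
    rw [List.forall_mem_cons] at hL
    rw [List.prod_cons, ← mulVec_mulVec, ih hL.2, hL.1.mulVec_one]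

theorem stmt_8 (n : ℕ) (hn : 1 ≤ n) :
    ∃ t : ℕ, 1 ≤ t ∧ ∃ P : Fin t → Matrix (Fin n) (Fin n) ℝ,
      (∀ k, memAsym n (P k)) ∧ ((List.ofFn P).reverse.prod).rank = 1 := by
  let i₀ : Fin n := ⟨0, hn⟩
  obtain ⟨_, ⟨L, hL, rfl⟩, w, hw⟩ := GossipReachable.exists_rows_eq (1 : Matrix (Fin n) (Fin n) ℝ)
    (Finset.univ_nonempty_iff.mpr ⟨i₀⟩)
  -- the trivial step `gossipA n i₀ i₀ = 1` makes the sequence nonempty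
  let L' := gossipA n i₀ i₀ :: L
  have hL' : ∀ P ∈ L', memAsym n P := List.forall_mem_cons.mpr ⟨⟨i₀, i₀, .inr rfl⟩, hL⟩
  refine ⟨L'.reverse.length, by simp [L'], L'.reverse.get,
    fun k => hL' _ (List.mem_reverse.mp (List.get_mem _ _)), ?_⟩
  rw [List.ofFn_get, List.reverse_reverse]
  have hrow : ∀ r, L'.prod r = w := fun r => by
    simpa [L', gossipA_self] using hw r (Finset.mem_univ r)
  refine rank_eq_one_of_row_eq hrow (v := 1) ?_
  rw [List.prod_mulVec_one_of_memAsym hL']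
  exact fun h => one_ne_zero (congrFun h i₀)
end

section
/- Let n = 2^m + r with integers m ≥ 0 and 0 ≤ r < 2^m. Then any matrices P_0, …, P_{t−1} ∈ 𝓜_n^♮ (t ≥ 1) whose product P_{t−1}⋯P_0 has all rows equal (equivalently, rank 1) satisfy Σ_{k=0}^{t−1} ‖I_n − P_k‖_1 ≥ m·n + 2r. -/
open Matrix

/-!
Gossip matrices are row-stochastic with diagonal entries in `{1, 1/2}`, and a row-stochastic
`P` satisfies `‖1 - P‖₁ = 2 ∑ₐ (1 - Pₐₐ)`. If `cₐ` counts the factors with `(P k)ₐₐ = 1/2`,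
the total cost is therefore `∑ₐ cₐ`, while the `a`-th diagonal entry of the (nonnegative)
product is at least `∏ₖ (P k)ₐₐ = 2^(-cₐ)`. When all rows of the product agree its trace is a
row sum, so `∑ₐ 2^(-cₐ) ≤ 1`. Applying `2^d ≥ d + 1` (valid for integers `d` only) to
`d = m + 1 - cₐ` and summing gives `∑ₐ cₐ ≥ n (m + 2) - 2^(m+1) = m n + 2 r`.
-/

theorem add_one_le_two_zpow (d : ℤ) : (d : ℝ) + 1 ≤ 2 ^ d := by
  rcases le_or_gt 0 d with hd | hd
  · lift d to ℕ using hd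
    exact_mod_cast d.lt_two_pow_self
  · have hd' : (d : ℝ) + 1 ≤ 0 := by exact_mod_cast hd
    exact hd'.trans (by positivity)

theorem card_mul_sub_le_sum_of_sum_inv_two_pow_le_one {ι : Type*} [Fintype ι] (c : ι → ℕ)
    (hc : ∑ i, ((2 : ℝ) ^ c i)⁻¹ ≤ 1) (m : ℕ) :
    Fintype.card ι * ((m : ℝ) + 2) - 2 ^ (m + 1) ≤ ∑ i, (c i : ℝ) := by
  have hpoint (i : ι) : (m : ℝ) + 2 - c i ≤ 2 ^ (m + 1) * ((2 : ℝ) ^ c i)⁻¹ := by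
    have := add_one_le_two_zpow ((m + 1 : ℕ) - c i)
    rw [zpow_sub₀ two_ne_zero, zpow_natCast, zpow_natCast, div_eq_mul_inv] at this
    push_cast at this
    linarith
  have hsum := Finset.sum_le_sum fun i (_ : i ∈ Finset.univ) => hpoint i
  rw [Finset.sum_sub_distrib, ← Finset.mul_sum, Finset.sum_const, nsmul_eq_mul] at hsum
  have hscaled : (2 : ℝ) ^ (m + 1) * ∑ i, ((2 : ℝ) ^ c i)⁻¹ ≤ 2 ^ (m + 1) :=
    mul_le_of_le_one_right (by positivity) hc
  simp only [Finset.card_univ] at hsum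
  linarith

section RowStochastic

variable {ι : Type*} [Fintype ι]

theorem apply_mul_apply_le_mul_apply {Q G : Matrix ι ι ℝ} (hQ : ∀ i j, 0 ≤ Q i j)
    (hG : ∀ i j, 0 ≤ G i j) (a b c : ι) : Q a b * G b c ≤ (Q * G) a c :=
  Finset.single_le_sum (f := fun k => Q a k * G k c) (fun k _ => mul_nonneg (hQ a k) (hG k c))
    (Finset.mem_univ b)

variable [DecidableEq ι]

theorem sum_abs_one_sub_eq_of_mem_rowStochastic {P : Matrix ι ι ℝ}
    (hP : P ∈ rowStochastic ℝ ι) :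
    ∑ i, ∑ j, |(1 - P) i j| = ∑ i, 2 * (1 - P i i) := by
  refine Finset.sum_congr rfl fun i _ => ?_
  have hentry (j : ι) : |(1 - P) i j| = P i j + if i = j then 1 - 2 * P i i else 0 := by
    rw [Matrix.sub_apply, one_apply]
    split_ifs with h
    · subst h
      rw [abs_of_nonneg (sub_nonneg.2 (le_one_of_mem_rowStochastic hP))]
      ring
    · rw [zero_sub, abs_neg, abs_of_nonneg (nonneg_of_mem_rowStochastic hP), add_zero]
  simp only [hentry, Finset.sum_add_distrib, sum_row_of_mem_rowStochastic hP, Finset.sum_ite_eq,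
    Finset.mem_univ, if_true]
  ring

theorem prod_map_apply_self_le_list_prod_apply_self (L : List (Matrix ι ι ℝ))
    (hL : ∀ A ∈ L, A ∈ rowStochastic ℝ ι) (a : ι) :
    (L.map fun A => A a a).prod ≤ L.prod a a := by
  induction L with
  | nil => simp
  | cons A L ih =>
    have hA := hL A List.mem_cons_self
    have hL' : ∀ B ∈ L, B ∈ rowStochastic ℝ ι := fun B hB => hL B (List.mem_cons_of_mem A hB)
    have hprod := Submonoid.list_prod_mem _ hL'
    rw [List.map_cons, List.prod_cons, List.prod_cons]
    calc A a a * (L.map fun A => A a a).prod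
        ≤ A a a * L.prod a a :=
          mul_le_mul_of_nonneg_left (ih hL') (nonneg_of_mem_rowStochastic hA)
      _ ≤ (A * L.prod) a a := apply_mul_apply_le_mul_apply
          (fun i j => nonneg_of_mem_rowStochastic hA (i := i) (j := j))
          (fun i j => nonneg_of_mem_rowStochastic hprod (i := i) (j := j)) a a a

theorem trace_le_one_of_mem_rowStochastic_of_rows_eq {Q : Matrix ι ι ℝ}
    (hQ : Q ∈ rowStochastic ℝ ι) (hrows : ∀ i i', Q i = Q i') : Q.trace ≤ 1 := by
  cases isEmpty_or_nonempty ι with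
  | inl => simp [trace]
  | inr h =>
    obtain ⟨i₀⟩ := h
    refine le_of_eq ?_
    calc Q.trace = ∑ j, Q i₀ j := Finset.sum_congr rfl fun j _ => congrFun (hrows j i₀) j
      _ = 1 := sum_row_of_mem_rowStochastic hQ i₀

end RowStochastic

theorem gossipM_apply (n : ℕ) (i j a b : Fin n) :
    gossipM n i j a b = (if a = b then 1 else 0) -
      1 / 2 * ((if a = i then 1 else 0) - (if a = j then 1 else 0)) *
        ((if b = i then 1 else 0) - (if b = j then 1 else 0)) := by
  simp [gossipM, one_apply, vecMulVec_apply, Pi.single_apply, mul_assoc]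

theorem gossipA_apply (n : ℕ) (i j a b : Fin n) :
    gossipA n i j a b = (if a = b then 1 else 0) -
      1 / 2 * (if a = i then 1 else 0) *
        ((if b = i then 1 else 0) - (if b = j then 1 else 0)) := by
  simp [gossipA, one_apply, vecMulVec_apply, Pi.single_apply]

theorem gossipM_mem_rowStochastic (n : ℕ) (i j : Fin n) :
    gossipM n i j ∈ rowStochastic ℝ (Fin n) := by
  refine mem_rowStochastic_iff_sum.2 ⟨fun a b => ?_, fun a => ?_⟩
  · rw [gossipM_apply]; split_ifs <;> subst_vars <;> norm_num at *
  · simp only [gossipM_apply, Finset.sum_sub_distrib, ← Finset.mul_sum, Finset.sum_ite_eq,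
      Finset.sum_ite_eq', Finset.mem_univ, if_true]
    ring

theorem gossipA_mem_rowStochastic (n : ℕ) (i j : Fin n) :
    gossipA n i j ∈ rowStochastic ℝ (Fin n) := by
  refine mem_rowStochastic_iff_sum.2 ⟨fun a b => ?_, fun a => ?_⟩
  · rw [gossipA_apply]; split_ifs <;> subst_vars <;> norm_num at *
  · simp only [gossipA_apply, Finset.sum_sub_distrib, ← Finset.mul_sum, Finset.sum_ite_eq,
      Finset.sum_ite_eq', Finset.mem_univ, if_true]
    ring

theorem memAsym.mem_rowStochastic {n : ℕ} {P : Matrix (Fin n) (Fin n) ℝ} (hP : memAsym n P) :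
    P ∈ rowStochastic ℝ (Fin n) := by
  obtain ⟨i, j, rfl | rfl⟩ := hP
  exacts [gossipM_mem_rowStochastic n i j, gossipA_mem_rowStochastic n i j]

theorem memAsym.apply_self_eq_one_or_half {n : ℕ} {P : Matrix (Fin n) (Fin n) ℝ}
    (hP : memAsym n P) (a : Fin n) : P a a = 1 ∨ P a a = 1 / 2 := by
  obtain ⟨i, j, rfl | rfl⟩ := hP
  · rw [gossipM_apply]; split_ifs <;> subst_vars <;> norm_num at *
  · rw [gossipA_apply]; split_ifs <;> subst_vars <;> norm_num at *

theorem card_mul_sub_le_sum_abs_one_sub {ι : Type*} [Fintype ι] [DecidableEq ι] {t : ℕ}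
    (P : Fin t → Matrix ι ι ℝ) (hP : ∀ k, P k ∈ rowStochastic ℝ ι)
    (hdiag : ∀ k a, P k a a = 1 ∨ P k a a = 1 / 2)
    (hrows : ∀ i i', (List.ofFn P).reverse.prod i = (List.ofFn P).reverse.prod i') (m : ℕ) :
    Fintype.card ι * ((m : ℝ) + 2) - 2 ^ (m + 1) ≤ ∑ k, ∑ i, ∑ j, |(1 - P k) i j| := by
  have hexp (k : Fin t) (a : ι) :
      ∃ e : ℕ, P k a a = ((2 : ℝ) ^ e)⁻¹ ∧ 2 * (1 - P k a a) = e := by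
    rcases hdiag k a with h | h <;> rw [h]
    exacts [⟨0, by norm_num⟩, ⟨1, by norm_num⟩]
  choose e he using hexp
  have hL : ∀ A ∈ (List.ofFn P).reverse, A ∈ rowStochastic ℝ ι := by
    simp only [List.mem_reverse, List.mem_ofFn]
    rintro _ ⟨k, rfl⟩
    exact hP k
  have hQ := Submonoid.list_prod_mem _ hL
  have hdiagQ (a : ι) : ((2 : ℝ) ^ ∑ k, e k a)⁻¹ ≤ (List.ofFn P).reverse.prod a a :=
    calc ((2 : ℝ) ^ ∑ k, e k a)⁻¹ = ∏ k, P k a a := by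
          simp only [(he _ _).1, ← Finset.prod_pow_eq_pow_sum, Finset.prod_inv_distrib]
      _ = ((List.ofFn P).reverse.map fun A => A a a).prod := by
          rw [List.map_reverse, List.prod_reverse, List.map_ofFn, List.prod_ofFn]; rfl
      _ ≤ (List.ofFn P).reverse.prod a a := prod_map_apply_self_le_list_prod_apply_self _ hL a
  have hkraft : ∑ a, ((2 : ℝ) ^ ∑ k, e k a)⁻¹ ≤ 1 :=
    (Finset.sum_le_sum fun a _ => hdiagQ a).trans
      (trace_le_one_of_mem_rowStochastic_of_rows_eq hQ hrows)
  have hcost : ∑ k, ∑ i, ∑ j, |(1 - P k) i j| = ∑ a, ((∑ k, e k a : ℕ) : ℝ) := by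
    simp only [sum_abs_one_sub_eq_of_mem_rowStochastic (hP _), (he _ _).2]
    push_cast
    exact Finset.sum_comm
  rw [hcost]
  exact card_mul_sub_le_sum_of_sum_inv_two_pow_le_one _ hkraft m

theorem stmt_10_general (m r n : ℕ) (hn : n = 2 ^ m + r) (t : ℕ)
    (P : Fin t → Matrix (Fin n) (Fin n) ℝ)
    (hP : ∀ k, memAsym n (P k))
    (hrows : ∀ i i' : Fin n, ((List.ofFn P).reverse.prod) i = ((List.ofFn P).reverse.prod) i') :
    ((m * n + 2 * r : ℕ) : ℝ) ≤ ∑ k, ∑ i, ∑ j, |(1 - P k) i j| := by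
  subst hn
  have hbound := card_mul_sub_le_sum_abs_one_sub P (fun k => (hP k).mem_rowStochastic)
    (fun k => (hP k).apply_self_eq_one_or_half) hrows m
  rw [Fintype.card_fin] at hbound
  calc ((m * (2 ^ m + r) + 2 * r : ℕ) : ℝ)
        = ((2 ^ m + r : ℕ) : ℝ) * (m + 2) - 2 ^ (m + 1) := by push_cast; ring
    _ ≤ _ := hbound

theorem stmt_10 (m r n : ℕ) (hr : r < 2 ^ m) (hn : n = 2 ^ m + r) (t : ℕ) (ht : 1 ≤ t)
    (P : Fin t → Matrix (Fin n) (Fin n) ℝ)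
    (hP : ∀ k, memAsym n (P k))
    (hrows : ∀ i i' : Fin n, ((List.ofFn P).reverse.prod) i = ((List.ofFn P).reverse.prod) i') :
    ((m * n + 2 * r : ℕ) : ℝ) ≤ ∑ k, ∑ i, ∑ j, |(1 - P k) i j| :=
  stmt_10_general m r n hn t P hP hrows
end

section
/- Let n = 2^m + r with integers m ≥ 1 and 0 ≤ r < 2^m. Then there exist an integer t ≥ 1 and matrices P_0, …, P_{t−1} ∈ 𝓜_n^♮ with Σ_{k=0}^{t−1} ‖I_n − P_k‖_1 = m·n + 2r and P_{t−1}⋯P_0 = 1·β^T, where β ∈ ℝ^n is given (after a suitable relabeling of the nodes) by β_i = 1/2^m for i = 1, …, n − 2r and β_i = 1/2^{m+1} for i = n − 2r + 1, …, n. -/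
open Matrix

/-!
Nodes are merged recursively. Suppose two disjoint blocks `A` and `B` have each reached
consensus, on weight vectors `wA` and `wB`. Every node of `B` other than its leader `b` averages
with the leader `a` of `A`, then every node of `A` other than `a` averages with `b`, and finally
`a` and `b` average with each other: now every node of `A ∪ B` holds `(wA + wB) / 2`, and the
merge costs `|A| + |B|` node updates. A block of `2^(m+1) + r` nodes, `r ≤ 2^(m+1)`, is split
into blocks of `2^m + rA` and `2^m + rB` nodes with `rA + rB = r` and `rA = 0` or `rB = 2^m`;
with this choice the averaged weights are again `2^-(m+1)` on the first `2^(m+1) - r` nodes and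
`2^-(m+2)` on the last `2r`, and the costs add up to `(m+1)(2^(m+1) + r) + 2r`.
-/

open Finset

variable {n : ℕ}

lemma gossipA_mul_apply (i j : Fin n) (Q : Matrix (Fin n) (Fin n) ℝ) (a b : Fin n) :
    (gossipA n i j * Q) a b = if a = i then (Q i b + Q j b) / 2 else Q a b := by
  simp only [gossipA, sub_mul, one_mul, Matrix.smul_mul, vecMulVec_mul, Matrix.sub_apply,
    Matrix.smul_apply, vecMulVec_apply, sub_vecMul, single_one_vecMul, Pi.sub_apply,
    Pi.single_apply, smul_eq_mul, row_apply]
  split_ifs <;> subst_vars <;> ring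

lemma gossipM_mul_apply (i j : Fin n) (Q : Matrix (Fin n) (Fin n) ℝ) (a b : Fin n) :
    (gossipM n i j * Q) a b = if a = i ∨ a = j then (Q i b + Q j b) / 2 else Q a b := by
  simp only [gossipM, sub_mul, one_mul, Matrix.smul_mul, vecMulVec_mul, Matrix.sub_apply,
    Matrix.smul_apply, vecMulVec_apply, sub_vecMul, single_one_vecMul, Pi.sub_apply,
    Pi.single_apply, smul_eq_mul, row_apply]
  split_ifs <;> simp_all <;> ring

noncomputable def nodeUpdates (P : Matrix (Fin n) (Fin n) ℝ) : ℝ := ∑ i, ∑ j, |(1 - P) i j|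

lemma nodeUpdates_one_sub_smul_vecMulVec (c : ℝ) (u v : Fin n → ℝ) :
    nodeUpdates (1 - c • vecMulVec u v) = |c| * (∑ a, |u a|) * ∑ b, |v b| := by
  simp only [nodeUpdates, sub_sub_cancel, Matrix.smul_apply, vecMulVec_apply, smul_eq_mul, abs_mul,
    mul_assoc, ← mul_sum, Fintype.sum_mul_sum]

lemma sum_abs_single_one (i : Fin n) : ∑ a, |(Pi.single i 1 : Fin n → ℝ) a| = 1 := by
  simp [Pi.single_apply, apply_ite]

lemma sum_abs_single_one_sub_single_one {i j : Fin n} (h : i ≠ j) :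
    ∑ a, |(Pi.single i 1 - Pi.single j 1 : Fin n → ℝ) a| = 2 := by
  rw [Fintype.sum_eq_add i j h fun c hc => by simp [hc.1, hc.2]]
  norm_num [h, h.symm]

lemma nodeUpdates_gossipM {i j : Fin n} (h : i ≠ j) : nodeUpdates (gossipM n i j) = 2 := by
  rw [gossipM, nodeUpdates_one_sub_smul_vecMulVec, sum_abs_single_one_sub_single_one h]
  norm_num

lemma nodeUpdates_gossipA {i j : Fin n} (h : i ≠ j) : nodeUpdates (gossipA n i j) = 1 := by
  rw [gossipA, nodeUpdates_one_sub_smul_vecMulVec, sum_abs_single_one,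
    sum_abs_single_one_sub_single_one h]
  norm_num

lemma prod_map_gossipA_mul {l : List (Fin n)} {b : Fin n} (hl : l.Nodup) (hb : b ∉ l)
    (Q : Matrix (Fin n) (Fin n) ℝ) :
    (l.map (gossipA n · b)).prod * Q =
      of fun i j => if i ∈ l then (Q i j + Q b j) / 2 else Q i j := by
  induction l with
  | nil => ext; simp
  | cons c l ih =>
    rw [List.nodup_cons] at hl
    rw [List.mem_cons, not_or] at hb
    rw [List.map_cons, List.prod_cons, mul_assoc, ih hl.2 hb.2]
    ext i j
    rw [gossipA_mul_apply]
    by_cases hic : i = c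
    · subst hic
      simp [hl.1, hb.2]
    · simp [hic]

lemma sum_nodeUpdates_map_gossipA {l : List (Fin n)} {b : Fin n} (hb : b ∉ l) :
    ((l.map (gossipA n · b)).map nodeUpdates).sum = l.length := by
  induction l with
  | nil => simp
  | cons c l ih =>
    rw [List.mem_cons, not_or] at hb
    rw [List.map_cons, List.map_cons, List.sum_cons, ih hb.2, nodeUpdates_gossipA (Ne.symm hb.1),
      List.length_cons, Nat.cast_succ, add_comm]

def consensusOn (S : Finset (Fin n)) (w : Fin n → ℝ) : Matrix (Fin n) (Fin n) ℝ :=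
  of fun i j => if i ∈ S then w j else (1 : Matrix (Fin n) (Fin n) ℝ) i j

lemma consensusOn_mul_consensusOn {A B : Finset (Fin n)} {wA wB : Fin n → ℝ}
    (hwB : ∀ j ∈ A, wB j = 0) :
    consensusOn B wB * consensusOn A wA =
      of fun i j => if i ∈ B then wB j else consensusOn A wA i j := by
  ext i j
  by_cases hi : i ∈ B
  · calc ∑ k, consensusOn B wB i k * consensusOn A wA k j
          = ∑ k, wB k * (1 : Matrix (Fin n) (Fin n) ℝ) k j :=
            sum_congr rfl fun k _ => by
              by_cases hk : k ∈ A <;> simp [consensusOn, hi, hk, hwB]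
        _ = _ := by simp [one_apply, hi]
  · simp only [mul_apply, consensusOn, of_apply, if_neg hi, one_apply, ite_mul, one_mul, zero_mul,
      sum_ite_eq, mem_univ, if_true]

noncomputable def mergeSchedule (A B : Finset (Fin n)) (a b : Fin n) :
    List (Matrix (Fin n) (Fin n) ℝ) :=
  gossipM n a b ::
    ((A.erase a).toList.map (gossipA n · b) ++ (B.erase b).toList.map (gossipA n · a))

lemma memAsym_of_mem_mergeSchedule {A B : Finset (Fin n)} {a b : Fin n}
    {P : Matrix (Fin n) (Fin n) ℝ} (hP : P ∈ mergeSchedule A B a b) : memAsym n P := by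
  simp only [mergeSchedule, List.mem_cons, List.mem_append, List.mem_map] at hP
  rcases hP with rfl | ⟨c, -, rfl⟩ | ⟨c, -, rfl⟩
  exacts [⟨a, b, .inl rfl⟩, ⟨c, b, .inr rfl⟩, ⟨c, a, .inr rfl⟩]

lemma sum_nodeUpdates_mergeSchedule {A B : Finset (Fin n)} (hAB : Disjoint A B) {a b : Fin n}
    (ha : a ∈ A) (hb : b ∈ B) :
    ((mergeSchedule A B a b).map nodeUpdates).sum = A.card + B.card := by
  have hbA : b ∉ A := disjoint_right.1 hAB hb
  have haB : a ∉ B := disjoint_left.1 hAB ha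
  rw [mergeSchedule, List.map_cons, List.sum_cons, List.map_append, List.sum_append,
    sum_nodeUpdates_map_gossipA (by simp [hbA]), sum_nodeUpdates_map_gossipA (by simp [haB]),
    nodeUpdates_gossipM (ne_of_mem_of_not_mem ha hbA), length_toList, length_toList,
    ← card_erase_add_one ha, ← card_erase_add_one hb]
  push_cast
  ring

lemma prod_mergeSchedule_mul {A B : Finset (Fin n)} (hAB : Disjoint A B) {a b : Fin n}
    (ha : a ∈ A) (hb : b ∈ B) {Q : Matrix (Fin n) (Fin n) ℝ} {wA wB : Fin n → ℝ}
    (hQA : ∀ i ∈ A, ∀ j, Q i j = wA j) (hQB : ∀ i ∈ B, ∀ j, Q i j = wB j) :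
    (mergeSchedule A B a b).prod * Q =
      of fun i j => if i ∈ A ∪ B then (wA j + wB j) / 2 else Q i j := by
  have hbA : b ∉ A := disjoint_right.1 hAB hb
  have haB : a ∉ B := disjoint_left.1 hAB ha
  rw [mergeSchedule, List.prod_cons, List.prod_append, mul_assoc, mul_assoc,
    prod_map_gossipA_mul (B.erase b).nodup_toList (by simp [haB]),
    prod_map_gossipA_mul (A.erase a).nodup_toList (by simp [hbA])]
  ext i j
  rw [gossipM_mul_apply]
  simp only [of_apply, mem_toList, mem_erase, mem_union]
  have hQa := hQA a ha j
  have hQb := hQB b hb j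
  rcases eq_or_ne i a with rfl | hia
  · simp [ha, haB, hbA, hQa, hQb]
  rcases eq_or_ne i b with rfl | hib
  · simp [hb, haB, hbA, hQa, hQb]
  · split_ifs <;> simp_all [add_comm]

lemma prod_mergeSchedule_mul_consensusOn {A B : Finset (Fin n)} (hAB : Disjoint A B) {a b : Fin n}
    (ha : a ∈ A) (hb : b ∈ B) {wA wB : Fin n → ℝ} (hwB : ∀ j ∈ A, wB j = 0) :
    (mergeSchedule A B a b).prod * (consensusOn B wB * consensusOn A wA) =
      consensusOn (A ∪ B) fun j => (wA j + wB j) / 2 := by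
  rw [consensusOn_mul_consensusOn hwB, prod_mergeSchedule_mul hAB ha hb (wA := wA) (wB := wB)]
  · ext i j
    simp only [consensusOn, of_apply, mem_union]
    split_ifs <;> simp_all
  · intro i hi
    simp [consensusOn, hi, disjoint_left.1 hAB hi]
  · intro i hi
    simp [consensusOn, hi]

-- `L` is listed in product order, so its head is the last update applied.
def IsSchedule (L : List (Matrix (Fin n) (Fin n) ℝ)) (cost : ℝ) (M : Matrix (Fin n) (Fin n) ℝ) :
    Prop :=
  (∀ P ∈ L, memAsym n P) ∧ (L.map nodeUpdates).sum = cost ∧ L.prod = M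

lemma IsSchedule.append {L₁ L₂ : List (Matrix (Fin n) (Fin n) ℝ)} {c₁ c₂ : ℝ}
    {M₁ M₂ : Matrix (Fin n) (Fin n) ℝ} (h₁ : IsSchedule L₁ c₁ M₁) (h₂ : IsSchedule L₂ c₂ M₂) :
    IsSchedule (L₁ ++ L₂) (c₁ + c₂) (M₁ * M₂) := by
  refine ⟨fun P hP => ?_, ?_, ?_⟩
  · rcases List.mem_append.1 hP with hP | hP
    exacts [h₁.1 P hP, h₂.1 P hP]
  · rw [List.map_append, List.sum_append, h₁.2.1, h₂.2.1]
  · rw [List.prod_append, h₁.2.2, h₂.2.2]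

lemma IsSchedule.merge {A B : Finset (Fin n)} (hAB : Disjoint A B) {a b : Fin n} (ha : a ∈ A)
    (hb : b ∈ B) {wA wB : Fin n → ℝ} (hwB : ∀ j ∈ A, wB j = 0)
    {LA LB : List (Matrix (Fin n) (Fin n) ℝ)} {cA cB : ℝ}
    (hA : IsSchedule LA cA (consensusOn A wA)) (hB : IsSchedule LB cB (consensusOn B wB)) :
    IsSchedule (mergeSchedule A B a b ++ (LB ++ LA)) (A.card + B.card + (cB + cA))
      (consensusOn (A ∪ B) fun j => (wA j + wB j) / 2) := by
  rw [← prod_mergeSchedule_mul_consensusOn hAB ha hb hwB]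
  exact IsSchedule.append ⟨fun _ => memAsym_of_mem_mergeSchedule,
    sum_nodeUpdates_mergeSchedule hAB ha hb, rfl⟩ (hB.append hA)

def nodesIco (lo hi : ℕ) : Finset (Fin n) := univ.filter fun i => lo ≤ (i : ℕ) ∧ (i : ℕ) < hi

@[simp]
lemma mem_nodesIco {lo hi : ℕ} {i : Fin n} : i ∈ nodesIco lo hi ↔ lo ≤ (i : ℕ) ∧ (i : ℕ) < hi := by
  simp [nodesIco]

lemma card_nodesIco {lo hi : ℕ} (h : hi ≤ n) :
    (nodesIco lo hi : Finset (Fin n)).card = hi - lo := by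
  rw [← Nat.card_Ico, ← card_map Fin.valEmbedding]
  congr 1
  ext x
  simp only [mem_map, mem_nodesIco, Fin.valEmbedding_apply, mem_Ico]
  constructor
  · rintro ⟨i, hi, rfl⟩
    exact hi
  · intro hx
    exact ⟨⟨x, by omega⟩, hx, rfl⟩

lemma nodesIco_union_nodesIco {lo mid hi : ℕ} (h₁ : lo ≤ mid) (h₂ : mid ≤ hi) :
    nodesIco lo mid ∪ nodesIco mid hi = (nodesIco lo hi : Finset (Fin n)) := by
  ext i
  simp only [mem_union, mem_nodesIco]
  omega

lemma disjoint_nodesIco_nodesIco (lo mid hi : ℕ) :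
    Disjoint (nodesIco lo mid : Finset (Fin n)) (nodesIco mid hi) :=
  disjoint_left.2 fun i h₁ h₂ => by simp only [mem_nodesIco] at h₁ h₂; omega

-- The first `2^m - r` nodes of the block `[lo, lo + 2^m + r)` get weight `2^-m`, the last `2r`
-- nodes get `2^-(m+1)`.
noncomputable def dyadicWeight (lo m r j : ℕ) : ℝ :=
  if lo ≤ j ∧ j < lo + 2 ^ m + r then
    if j + r < lo + 2 ^ m then (2 ^ m)⁻¹ else (2 ^ (m + 1))⁻¹
  else 0

lemma dyadicWeight_of_lt {lo m r j : ℕ} (h : j < lo) : dyadicWeight lo m r j = 0 := by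
  rw [dyadicWeight, if_neg (by omega)]

lemma add_dyadicWeight_div_two {lo M rA rB : ℕ} (hA : rA ≤ 2 ^ M) (hB : rB ≤ 2 ^ M)
    (hcase : rA = 0 ∨ rB = 2 ^ M) (j : ℕ) :
    (dyadicWeight lo M rA j + dyadicWeight (lo + 2 ^ M + rA) M rB j) / 2 =
      dyadicWeight lo (M + 1) (rA + rB) j := by
  rcases hcase with rfl | rfl <;>
  · simp only [dyadicWeight, Nat.two_pow_succ]
    split_ifs <;> first | omega | (field_simp; ring)

def IsDyadicSchedule (L : List (Matrix (Fin n) (Fin n) ℝ)) (lo m r : ℕ) : Prop :=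
  IsSchedule L (m * (2 ^ m + r) + 2 * r)
    (consensusOn (nodesIco lo (lo + 2 ^ m + r)) fun j => dyadicWeight lo m r j)

lemma isDyadicSchedule_nil (lo : ℕ) : IsDyadicSchedule (n := n) [] lo 0 0 := by
  refine ⟨by simp, by simp, ?_⟩
  ext i j
  simp only [List.prod_nil, consensusOn, of_apply, mem_nodesIco, dyadicWeight, one_apply,
    Fin.ext_iff, pow_zero]
  split_ifs <;> first | omega | norm_num

lemma isDyadicSchedule_gossipM {lo : ℕ} (h : lo + 1 < n) :
    IsDyadicSchedule [gossipM n ⟨lo, by omega⟩ ⟨lo + 1, h⟩] lo 0 1 := by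
  refine ⟨by simpa using ⟨_, _, .inl rfl⟩, ?_, ?_⟩
  · rw [List.map_singleton, List.sum_singleton, nodeUpdates_gossipM (by simp)]
    norm_num
  · ext i j
    rw [List.prod_singleton, ← mul_one (gossipM _ _ _), gossipM_mul_apply]
    simp only [consensusOn, of_apply, mem_nodesIco, dyadicWeight, one_apply, Fin.ext_iff, pow_zero]
    split_ifs <;> first | omega | norm_num

lemma IsDyadicSchedule.merge {lo M rA rB : ℕ} (hA : rA ≤ 2 ^ M) (hB : rB ≤ 2 ^ M)
    (hcase : rA = 0 ∨ rB = 2 ^ M) (hn : lo + 2 ^ (M + 1) + (rA + rB) ≤ n)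
    {LA LB : List (Matrix (Fin n) (Fin n) ℝ)} (hLA : IsDyadicSchedule LA lo M rA)
    (hLB : IsDyadicSchedule LB (lo + 2 ^ M + rA) M rB) :
    ∃ L : List (Matrix (Fin n) (Fin n) ℝ), IsDyadicSchedule L lo (M + 1) (rA + rB) := by
  have h2 := Nat.two_pow_succ M
  have hp : 1 ≤ 2 ^ M := Nat.one_le_two_pow
  have hcardA : (nodesIco lo (lo + 2 ^ M + rA) : Finset (Fin n)).card = 2 ^ M + rA := by
    rw [card_nodesIco (by omega)]; omega
  have hcardB : (nodesIco (lo + 2 ^ M + rA) (lo + 2 ^ M + rA + 2 ^ M + rB) :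
      Finset (Fin n)).card = 2 ^ M + rB := by
    rw [card_nodesIco (by omega)]; omega
  have hL := IsSchedule.merge (disjoint_nodesIco_nodesIco _ _ _)
    (a := ⟨lo, by omega⟩) (b := ⟨lo + 2 ^ M + rA, by omega⟩) (by simp; omega) (by simp; omega)
    (fun j hj => dyadicWeight_of_lt (by simp at hj; omega)) hLA hLB
  refine ⟨_, show IsSchedule _ _ _ by
    convert hL using 1
    · rw [hcardA, hcardB]
      push_cast
      ring
    · rw [nodesIco_union_nodesIco (by omega) (by omega)]
      congr 1
      · congr 1
        omega
      · funext j
        rw [add_dyadicWeight_div_two hA hB hcase]⟩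

theorem exists_isDyadicSchedule {m r lo : ℕ} (hr : r ≤ 2 ^ m) (hn : lo + 2 ^ m + r ≤ n) :
    ∃ L : List (Matrix (Fin n) (Fin n) ℝ), IsDyadicSchedule L lo m r := by
  induction m generalizing r lo with
  | zero =>
    interval_cases r
    exacts [⟨_, isDyadicSchedule_nil lo⟩, ⟨_, isDyadicSchedule_gossipM (by omega)⟩]
  | succ M ih =>
    have h2 := Nat.two_pow_succ M
    obtain ⟨rA, rB, rfl, hA, hB, hcase⟩ :
        ∃ rA rB, r = rA + rB ∧ rA ≤ 2 ^ M ∧ rB ≤ 2 ^ M ∧ (rA = 0 ∨ rB = 2 ^ M) :=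
      ⟨r - min r (2 ^ M), min r (2 ^ M), by omega, by omega, by omega, by omega⟩
    obtain ⟨LA, hLA⟩ := ih (lo := lo) hA (by omega)
    obtain ⟨LB, hLB⟩ := ih (lo := lo + 2 ^ M + rA) hB (by omega)
    exact hLA.merge hA hB hcase hn hLB

theorem stmt_11 (m r n : ℕ) (hm : 1 ≤ m) (hr : r < 2 ^ m) (hn : n = 2 ^ m + r) :
    ∃ t : ℕ, 1 ≤ t ∧ ∃ P : Fin t → Matrix (Fin n) (Fin n) ℝ,
      (∀ k, memAsym n (P k)) ∧
      (∑ k, ∑ i, ∑ j, |(1 - P k) i j|) = ((m * n + 2 * r : ℕ) : ℝ) ∧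
      (List.ofFn P).reverse.prod =
        vecMulVec (fun _ : Fin n => (1 : ℝ))
          (fun i : Fin n => if (i : ℕ) < n - 2 * r then (1 / 2 ^ m : ℝ) else 1 / 2 ^ (m + 1)) := by
  subst hn
  obtain ⟨L, hmem, hcost, hprod⟩ :=
    exists_isDyadicSchedule (n := 2 ^ m + r) (lo := 0) hr.le (by omega)
  have hL : L ≠ [] := by
    rintro rfl
    have hm' : (0 : ℝ) < m := by exact_mod_cast hm
    have : (0 : ℝ) < m * (2 ^ m + r) + 2 * r := by positivity
    simp [← hcost] at this
  refine ⟨L.reverse.length, (L.length_reverse ▸ List.length_pos_of_ne_nil hL), L.reverse.get,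
    fun k => hmem _ (List.mem_reverse.1 (List.get_mem _ _)), ?_, ?_⟩
  · change ∑ k, nodeUpdates (L.reverse.get k) = _
    rw [← List.sum_ofFn, List.ofFn_comp' L.reverse.get nodeUpdates, List.ofFn_get,
      List.map_reverse, List.sum_reverse, hcost]
    push_cast
    ring
  · rw [List.ofFn_get, List.reverse_reverse, hprod]
    ext i j
    simp only [consensusOn, of_apply, mem_nodesIco, dyadicWeight, vecMulVec_apply, one_div]
    split_ifs <;> first | omega | simp
end

section
/- Let n ≥ 3 and identify linear operators on the n-qubit space (ℂ²)^{⊗n} with 2^n × 2^n complex matrices indexed by functions q : {1,…,n} → {0,1}, with U_π the permutation matrix determined by U_π e_q = e_{q∘π} for each permutation π of {1,…,n}. Then for every sequence of index pairs (i_k, j_k) ∈ {1,…,n}², k = 0, 1, 2, …, with τ_k the transposition of i_k and j_k, there exists a density matrix ρ_0 (a Hermitian, positive semidefinite 2^n × 2^n complex matrix of trace 1) such that the quantum gossip iterates defined by ρ(0) = ρ_0 and ρ(k+1) = (1/2) ρ(k) + (1/2) U_{τ_k} ρ(k) U_{τ_k}† satisfy ρ(T) ≠ (1/n!) Σ_{π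 ∈ S_n} U_π ρ_0 U_π† for every integer T ≥ 0; that is, quantum gossiping never achieves global finite-time convergence to the symmetric state on a nontrivial quantum network. -/
/-!
A gossip step averages a matrix with a simultaneous permutation of its rows and columns. Starting
from the projection onto the basis vector `e_q` with `q = (1, 1, 0, …, 0)`, every entry of `ρ(T)` is
therefore a dyadic rational `m / 2^T`. The `(q, q)` entry of the symmetric state, however, is
`|Stab q| / n! = 2 (n-2)! / n! = 2 / (n (n-1))`, and for `n ≥ 3` one of `n`, `n - 1` is an odd
number greater than `1`, so this entry is not dyadic.
-/

open Matrix ComplexOrder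

/-- The permutation (unitary) matrix on `(ℂ²)^{⊗n}` determined by `U_π e_q = e_{q ∘ π}`,
with the computational basis indexed by functions `q : Fin n → Fin 2`. -/
def Uperm (n : ℕ) (π : Equiv.Perm (Fin n)) :
    Matrix (Fin n → Fin 2) (Fin n → Fin 2) ℂ :=
  Matrix.of fun p q => if p = q ∘ π then 1 else 0

theorem PEquiv.toMatrix_toPEquiv_mul_mul_conjTranspose {ι α : Type*} [Fintype ι] [DecidableEq ι]
    [Semiring α] [StarRing α] (e : ι ≃ ι) (A : Matrix ι ι α) :
    e.toPEquiv.toMatrix * A * (e.toPEquiv.toMatrix)ᴴ = A.submatrix e e := by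
  have : (e.toPEquiv.toMatrix : Matrix ι ι α)ᴴ = e.symm.toPEquiv.toMatrix := by
    ext i j
    simp only [conjTranspose_apply, PEquiv.toMatrix_apply, Equiv.toPEquiv_apply, Option.mem_def,
      Option.some.injEq, Equiv.symm_apply_eq, eq_comm (a := i)]
    split_ifs <;> simp
  rw [this, PEquiv.toMatrix_toPEquiv_mul, PEquiv.mul_toMatrix_toPEquiv, submatrix_submatrix]
  simp

theorem Uperm_eq_toMatrix (n : ℕ) (π : Equiv.Perm (Fin n)) :
    Uperm n π = (π.arrowCongr (Equiv.refl (Fin 2))).toPEquiv.toMatrix := by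
  ext p q
  simp only [Uperm, of_apply, PEquiv.toMatrix_apply, Equiv.toPEquiv_apply, Option.mem_def,
    Option.some.injEq]
  congr 1
  simp only [funext_iff, Function.comp_apply, Equiv.arrowCongr_apply, Equiv.coe_refl, eq_iff_iff]
  exact ⟨fun h x => by simpa using h (π.symm x), fun h x => by simpa using h (π x)⟩

theorem Uperm_mul_mul_conjTranspose (n : ℕ) (π : Equiv.Perm (Fin n))
    (A : Matrix (Fin n → Fin 2) (Fin n → Fin 2) ℂ) :
    Uperm n π * A * (Uperm n π)ᴴ =
      A.submatrix (π.arrowCongr (Equiv.refl _)) (π.arrowCongr (Equiv.refl _)) := by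
  rw [Uperm_eq_toMatrix, PEquiv.toMatrix_toPEquiv_mul_mul_conjTranspose]

theorem exists_nat_div_two_pow_of_average_submatrix {ι K : Type*} [Field K] (ρ : ℕ → Matrix ι ι K)
    (σ : ℕ → ι ≃ ι) (h0 : ∀ p q, ∃ m : ℕ, ρ 0 p q = m)
    (hstep : ∀ k, ρ (k + 1) = (1 / 2 : K) • ρ k + (1 / 2 : K) • (ρ k).submatrix (σ k) (σ k)) :
    ∀ k p q, ∃ m : ℕ, ρ k p q = m / 2 ^ k := by
  intro k
  induction k with
  | zero => simpa using h0
  | succ k ih =>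
    intro p q
    obtain ⟨m₁, h₁⟩ := ih p q
    obtain ⟨m₂, h₂⟩ := ih (σ k p) (σ k q)
    refine ⟨m₁ + m₂, ?_⟩
    rw [hstep]
    simp only [Matrix.add_apply, Matrix.smul_apply, submatrix_apply, smul_eq_mul, h₁, h₂]
    push_cast
    ring

theorem not_mul_sub_one_dvd_two_pow {n : ℕ} (hn : 3 ≤ n) (k : ℕ) : ¬ n * (n - 1) ∣ 2 ^ k := by
  intro h
  have odd_dvd : ∀ d, Odd d → d ∣ 2 ^ k → d = 1 := fun d hd hdvd =>
    (hd.coprime_two_right.pow_right k).eq_one_of_dvd hdvd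
  rcases Nat.even_or_odd n with hev | hodd
  · have : n - 1 = 1 := odd_dvd _ (Nat.Even.sub_odd (by omega) hev odd_one) (dvd_of_mul_left_dvd h)
    omega
  · have : n = 1 := odd_dvd _ hodd (dvd_of_mul_right_dvd h)
    omega

theorem sum_Uperm_conj_diagonal_single_apply (n : ℕ) (q : Fin n → Fin 2) :
    (∑ π : Equiv.Perm (Fin n), Uperm n π * diagonal (Pi.single q (1 : ℂ)) * (Uperm n π)ᴴ) q q =
      Fintype.card {π : Equiv.Perm (Fin n) // q ∘ π = q} := by
  rw [Matrix.sum_apply, ← Equiv.sum_comp (Equiv.inv _)]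
  simp only [Uperm_mul_mul_conjTranspose, submatrix_diagonal_equiv, diagonal_apply_eq,
    Function.comp_apply, Pi.single_apply]
  rw [Finset.sum_boole, Fintype.card_subtype]
  congr 2

def twoOnes (n : ℕ) : Fin n → Fin 2 := fun i => if (i : ℕ) < 2 then 1 else 0

theorem card_stabilizer_twoOnes {n : ℕ} (hn : 2 ≤ n) :
    Fintype.card {π : Equiv.Perm (Fin n) // twoOnes n ∘ π = twoOnes n} = 2 * (n - 2).factorial := by
  have h₁ : Fintype.card {i // twoOnes n i = 1} = 2 :=
    (Fintype.card_congr (Equiv.subtypeEquivRight fun i => by simp [twoOnes])).trans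
      (Fintype.card_fin_lt_of_le hn)
  have h₀ : Fintype.card {i // twoOnes n i = 0} = n - 2 := by
    rw [Fintype.card_congr (Equiv.subtypeEquivRight (q := fun i => ¬ twoOnes n i = 1)
      fun i => by simp [twoOnes]), Fintype.card_subtype_compl, h₁, Fintype.card_fin]
  rw [DomMulAct.stabilizer_card, Fin.prod_univ_two, h₀, h₁]
  simp [mul_comm]

theorem natCast_div_two_pow_ne_inv_factorial_mul {n : ℕ} (hn : 3 ≤ n) (m T : ℕ) :
    (m : ℂ) / 2 ^ T ≠ (n.factorial : ℂ)⁻¹ * (2 * (n - 2).factorial : ℕ) := by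
  intro h
  have hfac : n.factorial = n * (n - 1) * (n - 2).factorial := by
    obtain ⟨k, rfl⟩ : ∃ k, n = k + 2 := ⟨n - 2, by omega⟩
    simp [Nat.factorial_succ, mul_assoc]
  have hnat : m * n.factorial = 2 ^ T * (2 * (n - 2).factorial) := by
    field_simp at h
    exact_mod_cast h
  rw [hfac] at hnat
  refine not_mul_sub_one_dvd_two_pow hn (T + 1) ⟨m, ?_⟩
  apply Nat.eq_of_mul_eq_mul_right (Nat.factorial_pos (n - 2))
  rw [pow_succ]
  linarith

theorem stmt_17 (n : ℕ) (hn : 3 ≤ n) (pair : ℕ → Fin n × Fin n) :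
    ∃ ρ0 : Matrix (Fin n → Fin 2) (Fin n → Fin 2) ℂ,
      ρ0.PosSemidef ∧ ρ0.trace = 1 ∧
      ∀ ρ : ℕ → Matrix (Fin n → Fin 2) (Fin n → Fin 2) ℂ,
        ρ 0 = ρ0 →
        (∀ k, ρ (k + 1) = (1 / 2 : ℂ) • ρ k +
          (1 / 2 : ℂ) • (Uperm n (Equiv.swap (pair k).1 (pair k).2) * ρ k *
            (Uperm n (Equiv.swap (pair k).1 (pair k).2))ᴴ)) →
        ∀ T : ℕ, ρ T ≠
          ((n.factorial : ℂ))⁻¹ •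
            ∑ π : Equiv.Perm (Fin n), Uperm n π * ρ0 * (Uperm n π)ᴴ := by
  refine ⟨diagonal (Pi.single (twoOnes n) 1),
    posSemidef_diagonal_iff.2 (Pi.single_nonneg.2 zero_le_one), by simp [trace_diagonal],
    fun ρ h0 hstep T hT => ?_⟩
  have h0_nat : ∀ p q, ∃ m : ℕ, ρ 0 p q = m := fun p q =>
    ⟨if p = q ∧ p = twoOnes n then 1 else 0, by
      rw [h0, diagonal_apply, Pi.single_apply]; split_ifs <;> grind⟩
  obtain ⟨m, hm⟩ := exists_nat_div_two_pow_of_average_submatrix ρ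
    (fun k => (Equiv.swap (pair k).1 (pair k).2).arrowCongr (Equiv.refl _)) h0_nat
    (by simpa only [Uperm_mul_mul_conjTranspose] using hstep) T (twoOnes n) (twoOnes n)
  refine natCast_div_two_pow_ne_inv_factorial_mul hn m T ?_
  rw [← hm, hT, Matrix.smul_apply, sum_Uperm_conj_diagonal_single_apply,
    card_stabilizer_twoOnes (by omega), smul_eq_mul]
end
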